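/- arXiv:2312.16353 — 8 statements merged into one kernel-verified Lean document; each statement's English description precedes it below -/
import Mathlib

section
/- A partition λ is triangular (i.e., its Ferrers diagram can be separated from its complement in ℕ² by a straight line with positive intercepts) if and only if the convex hull of its Ferrers diagram and the convex hull of its complement ℕ² \ λ are disjoint. -/
/-!
A line x/r + y/s = 1 is a linear inequality `α x + β y ≤ w`, so it separates the
convex hulls as soon as it separates the cells. Conversely, if the hulls are disjoint, the hull of
the (finite) diagram is compact and the hull of the complementary cells inside a box just beyond
the diagram is compact too, so Hahn–Banach yields a separating linear form `α x + β y`. Comparing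
the cell (1,1) with the cells just right of and just above the diagram forces `α, β > 0`; a
form with nonnegative coefficients is monotone, and every complementary cell dominates the
complementary cell obtained by clamping it to the box, so the line separates the whole
complement.
-/

open Set

/-- The positive quadrant of lattice points, representing ℕ² in the paper. -/
def posQuad : Set (ℕ × ℕ) := {c | 1 ≤ c.1 ∧ 1 ≤ c.2}

/-- Embedding of lattice cells into the real plane. -/
noncomputable def toR2 (c : ℕ × ℕ) : ℝ × ℝ := ((c.1 : ℝ), (c.2 : ℝ))

/-- A set of cells is triangular if it consists exactly of the points of ℕ²
lying weakly below some line x/r + y/s = 1 with r, s > 0. -/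
def IsTriangularSet (S : Set (ℕ × ℕ)) : Prop :=
  ∃ r s : ℝ, 0 < r ∧ 0 < s ∧
    S = {c : ℕ × ℕ | 1 ≤ c.1 ∧ 1 ≤ c.2 ∧ (c.1 : ℝ) / r + (c.2 : ℝ) / s ≤ 1}

/-- `S` is the Ferrers diagram of an integer partition. -/
def IsPartitionSet (S : Set (ℕ × ℕ)) : Prop :=
  S.Finite ∧ S ⊆ posQuad ∧
    ∀ c ∈ S, ∀ a b : ℕ, 1 ≤ a → a ≤ c.1 → 1 ≤ b → b ≤ c.2 → (a, b) ∈ S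

/-- A cell is removable if deleting it yields a triangular partition. -/
def RemovableCell (S : Set (ℕ × ℕ)) (c : ℕ × ℕ) : Prop :=
  c ∈ S ∧ IsTriangularSet (S \ {c})

/-- A cell of the complement is addable if adjoining it yields a triangular partition. -/
def AddableCell (S : Set (ℕ × ℕ)) (c : ℕ × ℕ) : Prop :=
  c ∈ posQuad \ S ∧ IsTriangularSet (insert c S)

noncomputable def cellForm (α β : ℝ) (c : ℕ × ℕ) : ℝ := α * c.1 + β * c.2

lemma cellForm_mono {α β : ℝ} (hα : 0 ≤ α) (hβ : 0 ≤ β) {c d : ℕ × ℕ} (h : c ≤ d) :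
    cellForm α β c ≤ cellForm α β d := by
  unfold cellForm
  gcongr
  exacts [h.1, h.2]

lemma LinearMap.apply_toR2 (f : ℝ × ℝ →ₗ[ℝ] ℝ) (c : ℕ × ℕ) :
    f (toR2 c) = cellForm (f (1, 0)) (f (0, 1)) c := by
  have : toR2 c = (c.1 : ℝ) • ((1 : ℝ), (0 : ℝ)) + (c.2 : ℝ) • ((0 : ℝ), (1 : ℝ)) := by
    simp [toR2]
  rw [this, map_add, map_smul, map_smul, smul_eq_mul, smul_eq_mul, cellForm, mul_comm,
    mul_comm (c.2 : ℝ)]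

lemma isTriangularSet_iff_exists_halfPlane {S : Set (ℕ × ℕ)} :
    IsTriangularSet S ↔ ∃ α β w : ℝ, 0 < α ∧ 0 < β ∧ 0 < w ∧
      S = {c ∈ posQuad | cellForm α β c ≤ w} := by
  constructor
  · rintro ⟨r, s, hr, hs, rfl⟩
    refine ⟨r⁻¹, s⁻¹, 1, inv_pos.2 hr, inv_pos.2 hs, one_pos, ?_⟩
    ext c
    simp only [posQuad, cellForm, mem_ofPred_eq, and_assoc, div_eq_inv_mul]
  · rintro ⟨α, β, w, hα, hβ, hw, rfl⟩
    refine ⟨w / α, w / β, div_pos hw hα, div_pos hw hβ, ?_⟩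
    ext c
    simp only [posQuad, cellForm, mem_ofPred_eq, and_assoc, div_div_eq_mul_div, ← add_div,
      div_le_one hw, mul_comm]

lemma convexHull_inter_convexHull_eq_empty {E : Type*} [AddCommGroup E] [Module ℝ E]
    (f : E →ₗ[ℝ] ℝ) {A B : Set E} {w : ℝ} (hA : ∀ a ∈ A, f a ≤ w) (hB : ∀ b ∈ B, w < f b) :
    convexHull ℝ A ∩ convexHull ℝ B = ∅ := by
  have hA' := convexHull_min hA (convex_halfSpace_le f.isLinear w)
  have hB' := convexHull_min hB (convex_halfSpace_gt f.isLinear w)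
  ext p
  simp only [mem_inter_iff, mem_empty_iff_false, iff_false, not_and]
  exact fun hpA hpB => (show w < f p from hB' hpB).not_ge (hA' hpA)

lemma exists_cellForm_separating {S T : Set (ℕ × ℕ)} (hS : S.Finite) (hT : T.Finite)
    (h : Disjoint (convexHull ℝ (toR2 '' S)) (convexHull ℝ (toR2 '' T))) :
    ∃ α β w : ℝ, (∀ c ∈ S, cellForm α β c < w) ∧ ∀ c ∈ T, w < cellForm α β c := by
  obtain ⟨f, u, v, hu, huv, hv⟩ :=
    geometric_hahn_banach_compact_closed (convex_convexHull ℝ _)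
      ((hS.image toR2).isCompact_convexHull ℝ) (convex_convexHull ℝ _)
      ((hT.image toR2).isCompact_convexHull ℝ).isClosed h
  have hf (c : ℕ × ℕ) : f (toR2 c) = cellForm (f (1, 0)) (f (0, 1)) c := by
    simpa using f.toLinearMap.apply_toR2 c
  refine ⟨f (1, 0), f (0, 1), u, fun c hc => ?_, fun c hc => ?_⟩
  · rw [← hf]
    exact hu _ (subset_convexHull ℝ _ (mem_image_of_mem toR2 hc))
  · rw [← hf]
    exact huv.trans (hv _ (subset_convexHull ℝ _ (mem_image_of_mem toR2 hc)))

lemma IsPartitionSet.one_one_mem {S : Set (ℕ × ℕ)} (hS : IsPartitionSet S) (hne : S.Nonempty) :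
    (1, 1) ∈ S := by
  obtain ⟨c, hc⟩ := hne
  exact hS.2.2 c hc 1 1 le_rfl (hS.2.1 hc).1 le_rfl (hS.2.1 hc).2

lemma inf_mem_posQuad_diff {S : Set (ℕ × ℕ)} {W H : ℕ} (hWH : (W, H) ∈ upperBounds S)
    {c : ℕ × ℕ} (hc : c ∈ posQuad \ S) : c ⊓ (W + 1, H + 1) ∈ posQuad \ S := by
  obtain ⟨⟨h1, h2⟩, hcS⟩ := hc
  refine ⟨⟨?_, ?_⟩, fun h => hcS ?_⟩
  · simp only [Prod.fst_inf]; omega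
  · simp only [Prod.snd_inf]; omega
  · obtain ⟨hW, hH⟩ := hWH h
    simp only [Prod.fst_inf, Prod.snd_inf] at hW hH
    convert h using 1
    ext <;> simp only [Prod.fst_inf, Prod.snd_inf] <;> omega

lemma exists_halfPlane_of_disjoint_convexHull {S : Set (ℕ × ℕ)} (hS : IsPartitionSet S)
    (h : Disjoint (convexHull ℝ (toR2 '' S)) (convexHull ℝ (toR2 '' (posQuad \ S)))) :
    ∃ α β w : ℝ, 0 < α ∧ 0 < β ∧ 0 < w ∧ S = {c ∈ posQuad | cellForm α β c ≤ w} := by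
  obtain rfl | hne := S.eq_empty_or_nonempty
  · refine ⟨1, 1, 1, one_pos, one_pos, one_pos, ?_⟩
    ext c
    simp only [posQuad, cellForm, mem_empty_iff_false, mem_ofPred_eq, false_iff, not_and, not_le]
    rintro ⟨h1, h2⟩
    have : (1 : ℝ) ≤ c.1 := by exact_mod_cast h1
    have : (1 : ℝ) ≤ c.2 := by exact_mod_cast h2
    linarith
  obtain ⟨⟨W, H⟩, hWH⟩ := hS.1.bddAbove
  obtain ⟨α, β, w, hSw, hBw⟩ :=
    exists_cellForm_separating (T := (posQuad \ S) ∩ Iic (W + 1, H + 1)) hS.1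
      ((finite_Iic _).subset inter_subset_right)
      (h.mono_right (convexHull_mono (image_mono inter_subset_left)))
  have h11 : α + β < w := by simpa [cellForm] using hSw _ (hS.one_one_mem hne)
  have hWα : w < α * (W + 1) + β := by
    refine (hBw (W + 1, 1) ⟨⟨⟨by omega, le_rfl⟩, fun h => ?_⟩, by simp⟩).trans_eq ?_
    · have := (hWH h).1; simp at this
    · simp [cellForm]
  have hHβ : w < α + β * (H + 1) := by
    refine (hBw (1, H + 1) ⟨⟨⟨le_rfl, by omega⟩, fun h => ?_⟩, by simp⟩).trans_eq ?_
    · have := (hWH h).2; simp at this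
    · simp [cellForm]
  have hα : 0 < α := by nlinarith [(W.cast_nonneg : (0 : ℝ) ≤ W)]
  have hβ : 0 < β := by nlinarith [(H.cast_nonneg : (0 : ℝ) ≤ H)]
  refine ⟨α, β, w, hα, hβ, by linarith, ext fun c => ⟨fun hc => ⟨hS.2.1 hc, (hSw c hc).le⟩, ?_⟩⟩
  rintro ⟨hc, hcw⟩
  by_contra hcS
  have hclamp := inf_mem_posQuad_diff hWH ⟨hc, hcS⟩
  exact (hBw _ ⟨hclamp, mem_Iic.2 inf_le_right⟩).not_ge
    ((cellForm_mono hα.le hβ.le inf_le_left).trans hcw)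

/-- a partition is triangular iff the convex hull of its Ferrers
diagram and the convex hull of its complement in ℕ² are disjoint. -/
theorem stmt0 (S : Set (ℕ × ℕ)) (hS : IsPartitionSet S) :
    IsTriangularSet S ↔
      convexHull ℝ (toR2 '' S) ∩ convexHull ℝ (toR2 '' (posQuad \ S)) = ∅ := by
  rw [isTriangularSet_iff_exists_halfPlane]
  constructor
  · rintro ⟨α, β, w, -, -, -, rfl⟩
    refine convexHull_inter_convexHull_eq_empty
      (α • LinearMap.fst ℝ ℝ ℝ + β • LinearMap.snd ℝ ℝ ℝ) (w := w) ?_ ?_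
    · rintro _ ⟨c, ⟨-, hc⟩, rfl⟩
      simpa [toR2, cellForm] using hc
    · rintro _ ⟨c, ⟨hc, hcS⟩, rfl⟩
      simpa [toR2, cellForm] using fun h => hcS ⟨hc, h⟩
  · exact fun h => exists_halfPlane_of_disjoint_convexHull hS (disjoint_iff_inter_eq_empty.2 h)
end

section
/- A partition λ is triangular if and only if no vertex of the convex hull of its Ferrers diagram lies in the convex hull of ℕ² \ λ, and no vertex of the convex hull of ℕ² \ λ lies in the convex hull of λ. -/
open Set

/-!
Write `K` for the convex hull of the diagram and `C` for that of its complement. A line cuts a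
triangular diagram off its complement, so `K` and `C` are disjoint. Conversely, disjoint `K`
(compact) and `C` (closed, being a polytope plus the positive quadrant) are strictly separated by
a line; since `(1,1)` lies below it and `(N,1)`, `(1,N)` above, both of its coefficients are
positive, which makes the diagram triangular.

It remains to see that the vertex conditions force `K ∩ C = ∅`. Otherwise, among pairs `P ∈ K`,
`Q ∈ C` on a common vertical line take one maximising the gap `P.2 - Q.2 ≥ 0`, and among those the
leftmost. If neither were a vertex, there would be `v, w ≠ 0` with `P ± v ∈ K` and `Q ± w ∈ C`.
If `v` is vertical, moving `P` alone by `±v` changes the gap in both directions; likewise for `w`.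
Otherwise moving `P` and `Q` along rescaled `v`, `w` with equal horizontal components keeps the
gap maximal in both directions, and one direction goes left. So `P` is a vertex of `K`, lying in
`C` since `C` is closed upwards, or `Q` is a vertex of `C`, lying in `K` since `K` is closed
downwards to height `1`.
-/

open Pointwise

section Convex

variable {E : Type*} [AddCommGroup E] [Module ℝ E]

theorem add_smul_mem_convexHull_of_add_mem {A : Set E} {d : E} (hA : ∀ z ∈ A, z + d ∈ A)
    {z : E} (hz : z ∈ convexHull ℝ A) {t : ℝ} (ht : 0 ≤ t) : z + t • d ∈ convexHull ℝ A := by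
  have hnat : ∀ z ∈ A, ∀ n : ℕ, z + (n : ℝ) • d ∈ A := by
    intro z hz n
    induction n with
    | zero => simpa using hz
    | succ n ih => simpa [add_smul, add_assoc] using hA _ ih
  have hgen : ∀ z ∈ A, z + t • d ∈ convexHull ℝ A := by
    intro z hz
    set n := ⌊t⌋₊
    have hseg : z + t • d ∈ segment ℝ (z + (n : ℝ) • d) (z + ((n + 1 : ℕ) : ℝ) • d) := by
      rw [segment_eq_image']
      refine ⟨t - n, ⟨sub_nonneg.2 (Nat.floor_le ht), ?_⟩, ?_⟩
      · linarith [Nat.lt_floor_add_one t]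
      · push_cast
        module
    exact (convex_convexHull ℝ A).segment_subset (subset_convexHull ℝ A (hnat z hz n))
      (subset_convexHull ℝ A (hnat z hz (n + 1))) hseg
  exact convexHull_min hgen ((convex_convexHull ℝ A).translate_preimage_left (t • d)) hz

theorem exists_add_sub_mem_of_notMem_extremePoints {A : Set E} (hA : Convex ℝ A) {x : E}
    (hx : x ∈ A) (hx' : x ∉ A.extremePoints ℝ) : ∃ v ≠ 0, x + v ∈ A ∧ x - v ∈ A := by
  rw [mem_extremePoints_iff_left] at hx'
  push Not at hx'
  obtain ⟨x₁, h₁, x₂, h₂, ⟨a, b, ha, hb, hab, rfl⟩, hne⟩ := hx' hx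
  have hε : 0 < min a b := lt_min ha hb
  refine ⟨min a b • (x₂ - x₁), smul_ne_zero hε.ne' (sub_ne_zero.2 ?_), ?_, ?_⟩
  · rintro rfl
    exact hne (by rw [← add_smul, hab, one_smul])
  · convert hA h₁ h₂ (sub_nonneg.2 (min_le_left a b)) (by positivity : 0 ≤ b + min a b)
      (by linarith) using 1
    module
  · convert hA h₁ h₂ (by positivity : 0 ≤ a + min a b) (sub_nonneg.2 (min_le_right a b))
      (by linarith) using 1
    module

theorem Convex.add_smul_mem_and_sub_smul_mem {A : Set E} (hA : Convex ℝ A) {x v : E}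
    (hadd : x + v ∈ A) (hsub : x - v ∈ A) {t : ℝ} (ht : |t| ≤ 1) :
    x + t • v ∈ A ∧ x - t • v ∈ A := by
  obtain ⟨ht₁, ht₂⟩ := abs_le.1 ht
  constructor
  · convert hA hsub hadd (by linarith : 0 ≤ (1 - t) / 2) (by linarith : 0 ≤ (1 + t) / 2)
      (by linarith) using 1
    module
  · convert hA hsub hadd (by linarith : 0 ≤ (1 + t) / 2) (by linarith : 0 ≤ (1 - t) / 2)
      (by linarith) using 1
    module

end Convex

section VerticalGap

variable {K C : Set (ℝ × ℝ)}

def IsLeftmostMaxGap (K C : Set (ℝ × ℝ)) (P Q : ℝ × ℝ) : Prop :=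
  P ∈ K ∧ Q ∈ C ∧ P.1 = Q.1 ∧ ∀ k ∈ K, ∀ c ∈ C, k.1 = c.1 →
    k.2 - c.2 ≤ P.2 - Q.2 ∧ (k.2 - c.2 = P.2 - Q.2 → P.1 ≤ k.1)

theorem exists_isLeftmostMaxGap {b : ℝ} (hK : IsCompact K) (hC : IsClosed C)
    (hCb : ∀ z ∈ C, b ≤ z.2) (hKC : (K ∩ C).Nonempty) : ∃ P Q, IsLeftmostMaxGap K C P Q := by
  obtain ⟨M, hM⟩ := (hK.image continuous_snd).bddAbove
  replace hM : ∀ k ∈ K, k.2 ≤ M := fun k hk => hM ⟨k, hk, rfl⟩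
  -- pairs whose lower point is above `M` have negative gap, so it suffices to look at the others
  set D := {q : (ℝ × ℝ) × (ℝ × ℝ) | q.1 ∈ K ∧ q.2 ∈ C ∧ q.1.1 = q.2.1 ∧ q.2.2 ≤ M}
  have hD : IsCompact D := by
    refine IsCompact.of_isClosed_subset
      (hK.prod ((hK.image continuous_fst).prod (isCompact_Icc (a := b) (b := M)))) ?_ ?_
    · exact (hK.isClosed.preimage continuous_fst).inter <| (hC.preimage continuous_snd).inter <|
        (isClosed_eq continuous_fst.fst continuous_snd.fst).inter
          (isClosed_le continuous_snd.snd continuous_const)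
    · rintro ⟨k, c⟩ ⟨hk, hc, hkc, hcM⟩
      exact ⟨hk, ⟨k, hk, hkc⟩, hCb c hc, hcM⟩
  set gap : (ℝ × ℝ) × (ℝ × ℝ) → ℝ := fun q => q.1.2 - q.2.2
  obtain ⟨p, hpK, hpC⟩ := hKC
  have hpD : (p, p) ∈ D := ⟨hpK, hpC, rfl, hM p hpK⟩
  obtain ⟨q₀, hq₀, hmax⟩ := hD.exists_isMaxOn ⟨_, hpD⟩ (by fun_prop : Continuous gap).continuousOn
  have hgap₀ : 0 ≤ gap q₀ := by simpa [gap] using hmax hpD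
  have hle : ∀ k ∈ K, ∀ c ∈ C, k.1 = c.1 → k.2 - c.2 ≤ gap q₀ := by
    intro k hk c hc hkc
    by_cases hcM : c.2 ≤ M
    · exact hmax (show (k, c) ∈ D from ⟨hk, hc, hkc, hcM⟩)
    · linarith [hM k hk]
  have hD₀ : IsCompact (D ∩ {q | gap q = gap q₀}) :=
    hD.inter_right (isClosed_eq (by fun_prop) continuous_const)
  obtain ⟨q, ⟨hqD, hq⟩, hmin⟩ :=
    hD₀.exists_isMinOn ⟨q₀, hq₀, rfl⟩ (continuous_fst.fst.continuousOn (s := D ∩ _))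
  refine ⟨q.1, q.2, hqD.1, hqD.2.1, hqD.2.2.1, fun k hk c hc hkc => ⟨?_, fun h => ?_⟩⟩
  · exact (hle k hk c hc hkc).trans_eq hq.symm
  · have hcM : c.2 ≤ M := by linarith [hM k hk, hq.symm ▸ hgap₀]
    exact hmin (show (k, c) ∈ D ∩ _ from ⟨⟨hk, hc, hkc, hcM⟩, h.trans hq⟩)

namespace IsLeftmostMaxGap

variable {P Q : ℝ × ℝ}

theorem snd_le (h : IsLeftmostMaxGap K C P Q) (hKC : (K ∩ C).Nonempty) : Q.2 ≤ P.2 := by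
  obtain ⟨p, hpK, hpC⟩ := hKC
  linarith [(h.2.2.2 p hpK p hpC rfl).1]

theorem eq_and_fst_eq_zero_of_add_sub_mem (h : IsLeftmostMaxGap K C P Q) {u u' : ℝ × ℝ}
    (hu : u.1 = u'.1) (hKadd : P + u ∈ K) (hKsub : P - u ∈ K) (hCadd : Q + u' ∈ C)
    (hCsub : Q - u' ∈ C) : u = u' ∧ u.1 = 0 := by
  obtain ⟨-, -, hPQ, hopt⟩ := h
  obtain ⟨hadd, hadd'⟩ := hopt _ hKadd _ hCadd (by simp [hPQ, hu])
  obtain ⟨hsub, hsub'⟩ := hopt _ hKsub _ hCsub (by simp [hPQ, hu])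
  simp only [Prod.fst_add, Prod.snd_add, Prod.fst_sub, Prod.snd_sub] at *
  have h₂ : u.2 = u'.2 := by linarith
  exact ⟨Prod.ext hu h₂, by linarith [hadd' (by linarith), hsub' (by linarith)]⟩

theorem mem_extremePoints_or (h : IsLeftmostMaxGap K C P Q) (hK : Convex ℝ K)
    (hC : Convex ℝ C) : P ∈ K.extremePoints ℝ ∨ Q ∈ C.extremePoints ℝ := by
  by_contra! hne
  obtain ⟨v, hv, hvadd, hvsub⟩ := exists_add_sub_mem_of_notMem_extremePoints hK h.1 hne.1
  obtain ⟨w, hw, hwadd, hwsub⟩ := exists_add_sub_mem_of_notMem_extremePoints hC h.2.1 hne.2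
  by_cases hv₁ : v.1 = 0
  · exact hv (h.eq_and_fst_eq_zero_of_add_sub_mem (u' := 0) (by simpa) hvadd hvsub
      (by simpa using h.2.1) (by simpa using h.2.1)).1
  by_cases hw₁ : w.1 = 0
  · exact hw (h.eq_and_fst_eq_zero_of_add_sub_mem (u := 0) (by simpa using hw₁.symm)
      (by simpa using h.1) (by simpa using h.1) hwadd hwsub).1.symm
  -- scale `v` by `w.1 / m` and `w` by `v.1 / m`: equal horizontal components, factors in `[-1, 1]`
  set m := |v.1| + |w.1| + 1
  have hm : 0 < m := by positivity
  have hwm : |w.1 / m| ≤ 1 := by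
    rw [abs_div, abs_of_pos hm, div_le_one hm]; linarith [abs_nonneg v.1]
  have hvm : |v.1 / m| ≤ 1 := by
    rw [abs_div, abs_of_pos hm, div_le_one hm]; linarith [abs_nonneg w.1]
  obtain ⟨hKadd, hKsub⟩ := hK.add_smul_mem_and_sub_smul_mem hvadd hvsub hwm
  obtain ⟨hCadd, hCsub⟩ := hC.add_smul_mem_and_sub_smul_mem hwadd hwsub hvm
  have hmoved := h.eq_and_fst_eq_zero_of_add_sub_mem
    (by simp only [Prod.smul_fst, smul_eq_mul]; ring) hKadd hKsub hCadd hCsub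
  have h₀ : w.1 / m * v.1 = 0 := by simpa using hmoved.2
  simp [hv₁, hw₁, hm.ne'] at h₀

end IsLeftmostMaxGap

theorem extremePoints_inter_nonempty_or {b : ℝ} (hKc : IsCompact K) (hK : Convex ℝ K)
    (hCc : IsClosed C) (hC : Convex ℝ C)
    (hKdown : ∀ x y y', (x, y) ∈ K → b ≤ y' → y' ≤ y → (x, y') ∈ K)
    (hCb : ∀ z ∈ C, b ≤ z.2) (hCup : ∀ z ∈ C, ∀ t : ℝ, 0 ≤ t → z + (0, t) ∈ C)
    (hKC : (K ∩ C).Nonempty) :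
    (K.extremePoints ℝ ∩ C).Nonempty ∨ (C.extremePoints ℝ ∩ K).Nonempty := by
  obtain ⟨P, Q, h⟩ := exists_isLeftmostMaxGap hKc hCc hCb hKC
  have hQP := h.snd_le hKC
  rcases h.mem_extremePoints_or hK hC with hP | hQ
  · refine .inl ⟨P, hP, ?_⟩
    convert hCup Q h.2.1 (P.2 - Q.2) (sub_nonneg.2 hQP) using 1
    ext <;> simp [h.2.2.1]
  · refine .inr ⟨Q, hQ, ?_⟩
    simpa [h.2.2.1] using hKdown P.1 P.2 Q.2 h.1 (hCb Q h.2.1) hQP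

end VerticalGap

theorem toR2_mono : Monotone toR2 := fun _ _ h => ⟨Nat.cast_le.2 h.1, Nat.cast_le.2 h.2⟩

theorem toR2_add (a c : ℕ × ℕ) : toR2 (a + c) = toR2 a + toR2 c := by
  simp [toR2]

theorem convexHull_subset_Ici_one {T : Set (ℕ × ℕ)} (hT : T ⊆ posQuad) :
    convexHull ℝ (toR2 '' T) ⊆ Ici 1 := by
  refine convexHull_min ?_ (convex_Ici 1)
  rintro _ ⟨c, hc, rfl⟩
  exact ⟨Nat.one_le_cast.2 (hT hc).1, Nat.one_le_cast.2 (hT hc).2⟩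

namespace IsPartitionSet

variable {S : Set (ℕ × ℕ)}

theorem mem_of_le (hS : IsPartitionSet S) {a c : ℕ × ℕ} (hc : c ∈ S) (ha : a ∈ posQuad)
    (hac : a ≤ c) : a ∈ S :=
  hS.2.2 c hc a.1 a.2 ha.1 hac.1 ha.2 hac.2

theorem one_one_mem_s1 (hS : IsPartitionSet S) (hne : S.Nonempty) : (1, 1) ∈ S := by
  obtain ⟨c, hc⟩ := hne
  exact hS.mem_of_le hc ⟨le_rfl, le_rfl⟩ ⟨(hS.2.1 hc).1, (hS.2.1 hc).2⟩

theorem compl_mem_of_le (hS : IsPartitionSet S) {a c : ℕ × ℕ} (hc : c ∈ posQuad \ S)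
    (hca : c ≤ a) : a ∈ posQuad \ S :=
  ⟨⟨hc.1.1.trans hca.1, hc.1.2.trans hca.2⟩, fun ha => hc.2 (hS.mem_of_le ha hc.1 hca)⟩

theorem exists_bound (hS : IsPartitionSet S) : ∃ N : ℕ, 1 ≤ N ∧ ∀ c ∈ S, c.1 < N ∧ c.2 < N := by
  obtain ⟨M, hM⟩ := hS.1.bddAbove
  exact ⟨M.1 + M.2 + 1, by omega, fun c hc => ⟨by linarith [(hM hc).1], by linarith [(hM hc).2]⟩⟩

theorem inf_mem_compl {N : ℕ} (hN : 1 ≤ N) (hNS : ∀ c ∈ S, c.1 < N ∧ c.2 < N) {c : ℕ × ℕ}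
    (hc : c ∈ posQuad \ S) : c ⊓ (N, N) ∈ posQuad \ S := by
  refine ⟨⟨le_min hc.1.1 hN, le_min hc.1.2 hN⟩, fun h => hc.2 ?_⟩
  obtain ⟨h₁, h₂⟩ := hNS _ h
  have hle : c ≤ (N, N) :=
    ⟨((min_lt_iff.1 h₁).resolve_right (lt_irrefl N)).le,
      ((min_lt_iff.1 h₂).resolve_right (lt_irrefl N)).le⟩
  rwa [inf_eq_left.2 hle] at h

theorem mk_mem_convexHull_of_le (hS : IsPartitionSet S) {x y y' : ℝ}
    (hxy : (x, y) ∈ convexHull ℝ (toR2 '' S)) (hy₁ : 1 ≤ y') (hy₂ : y' ≤ y) :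
    (x, y') ∈ convexHull ℝ (toR2 '' S) := by
  have hconv : Convex ℝ {p : ℝ × ℝ | (p.1, 1) ∈ convexHull ℝ (toR2 '' S)} := by
    intro p hp q hq a b ha hb hab
    show ((a • p + b • q).1, (1 : ℝ)) ∈ convexHull ℝ (toR2 '' S)
    convert convex_convexHull ℝ _ hp hq ha hb hab using 1
    ext <;> simp [hab]
  have hbase : (x, 1) ∈ convexHull ℝ (toR2 '' S) := by
    refine convexHull_min ?_ hconv hxy
    rintro _ ⟨c, hc, rfl⟩
    exact subset_convexHull ℝ _
      ⟨(c.1, 1), hS.mem_of_le hc ⟨(hS.2.1 hc).1, le_rfl⟩ ⟨le_rfl, (hS.2.1 hc).2⟩, by simp [toR2]⟩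
  refine (convex_convexHull ℝ _).segment_subset hbase hxy ?_
  rw [← Prod.image_mk_segment_right, segment_eq_Icc (hy₁.trans hy₂)]
  exact ⟨y', ⟨hy₁, hy₂⟩, rfl⟩

theorem add_mem_convexHull_compl (hS : IsPartitionSet S) {z v : ℝ × ℝ}
    (hz : z ∈ convexHull ℝ (toR2 '' (posQuad \ S))) (hv : 0 ≤ v) :
    z + v ∈ convexHull ℝ (toR2 '' (posQuad \ S)) := by
  have hstep (e : ℕ × ℕ) : ∀ w ∈ toR2 '' (posQuad \ S), w + toR2 e ∈ toR2 '' (posQuad \ S) := by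
    rintro _ ⟨c, hc, rfl⟩
    exact ⟨c + e, hS.compl_mem_of_le hc le_self_add, toR2_add c e⟩
  have hmem := add_smul_mem_convexHull_of_add_mem (hstep (1, 0))
    (add_smul_mem_convexHull_of_add_mem (hstep (0, 1)) hz hv.2) hv.1
  convert hmem using 1
  ext <;> simp [toR2, add_assoc]

theorem isCompact_convexHull (hS : IsPartitionSet S) : IsCompact (convexHull ℝ (toR2 '' S)) :=
  (hS.1.image toR2).isCompact_convexHull (𝕜 := ℝ)

theorem isClosed_convexHull_compl (hS : IsPartitionSet S) :
    IsClosed (convexHull ℝ (toR2 '' (posQuad \ S))) := by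
  obtain ⟨N, hN, hNS⟩ := hS.exists_bound
  set F := (posQuad \ S) ∩ Iic (N, N)
  have hF : F.Finite := (finite_Iic _).subset inter_subset_right
  suffices h : convexHull ℝ (toR2 '' (posQuad \ S)) = convexHull ℝ (toR2 '' F) + Ici 0 by
    rw [h]
    exact isClosed_Ici.add_left_of_isCompact ((hF.image toR2).isCompact_convexHull (𝕜 := ℝ))
  refine subset_antisymm (convexHull_min ?_ ((convex_convexHull ℝ _).add (convex_Ici 0))) ?_
  · rintro _ ⟨c, hc, rfl⟩
    have hcF : c ⊓ (N, N) ∈ F := ⟨inf_mem_compl hN hNS hc, mem_Iic.2 inf_le_right⟩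
    exact ⟨toR2 (c ⊓ (N, N)), subset_convexHull ℝ _ ⟨_, hcF, rfl⟩,
      toR2 c - toR2 (c ⊓ (N, N)), sub_nonneg.2 (toR2_mono inf_le_left), add_sub_cancel _ _⟩
  · rintro _ ⟨x, hx, v, hv, rfl⟩
    exact hS.add_mem_convexHull_compl (convexHull_mono (image_mono inter_subset_left) hx) hv

end IsPartitionSet

theorem isTriangularSet_of_forall_mem_iff {S : Set (ℕ × ℕ)} {A B t : ℝ} (hA : 0 < A)
    (hB : 0 < B) (ht : 0 < t) (hSq : S ⊆ posQuad)
    (hS : ∀ c ∈ posQuad, c ∈ S ↔ (c.1 : ℝ) * A + c.2 * B ≤ t) : IsTriangularSet S := by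
  refine ⟨t / A, t / B, div_pos ht hA, div_pos ht hB, ?_⟩
  ext c
  have hc : (c.1 : ℝ) / (t / A) + c.2 / (t / B) = (c.1 * A + c.2 * B) / t := by
    field_simp
  rw [mem_ofPred_eq, hc, div_le_one ht]
  exact ⟨fun h => ⟨(hSq h).1, (hSq h).2, (hS c (hSq h)).1 h⟩,
    fun ⟨h₁, h₂, h⟩ => (hS c ⟨h₁, h₂⟩).2 h⟩

theorem IsTriangularSet.disjoint_convexHull {S : Set (ℕ × ℕ)} (h : IsTriangularSet S) :
    Disjoint (convexHull ℝ (toR2 '' S)) (convexHull ℝ (toR2 '' (posQuad \ S))) := by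
  obtain ⟨r, s, -, -, hS⟩ := h
  set ψ : ℝ × ℝ →ₗ[ℝ] ℝ := r⁻¹ • LinearMap.fst ℝ ℝ ℝ + s⁻¹ • LinearMap.snd ℝ ℝ ℝ
  have hψ (c : ℕ × ℕ) : ψ (toR2 c) = (c.1 : ℝ) / r + c.2 / s := by
    simp [ψ, toR2, div_eq_inv_mul]
  have hle : convexHull ℝ (toR2 '' S) ⊆ ψ ⁻¹' Iic 1 := by
    refine convexHull_min ?_ ((convex_Iic 1).linear_preimage ψ)
    rintro _ ⟨c, hc, rfl⟩
    exact (hψ c).trans_le (hS ▸ hc).2.2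
  have hgt : convexHull ℝ (toR2 '' (posQuad \ S)) ⊆ ψ ⁻¹' Ioi 1 := by
    refine convexHull_min ?_ ((convex_Ioi 1).linear_preimage ψ)
    rintro _ ⟨c, hc, rfl⟩
    exact (hψ c).trans_gt (lt_of_not_ge fun h => hc.2 (hS ▸ ⟨hc.1.1, hc.1.2, h⟩))
  exact Disjoint.mono hle hgt ((Iic_disjoint_Ioi le_rfl).preimage ψ)

theorem IsPartitionSet.isTriangularSet_of_disjoint {S : Set (ℕ × ℕ)} (hS : IsPartitionSet S)
    (hd : Disjoint (convexHull ℝ (toR2 '' S)) (convexHull ℝ (toR2 '' (posQuad \ S)))) :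
    IsTriangularSet S := by
  rcases S.eq_empty_or_nonempty with rfl | hne
  · refine isTriangularSet_of_forall_mem_iff one_pos one_pos one_pos (empty_subset _) ?_
    intro c hc
    have h₁ : (1 : ℝ) ≤ c.1 := Nat.one_le_cast.2 hc.1
    have h₂ : (1 : ℝ) ≤ c.2 := Nat.one_le_cast.2 hc.2
    simp only [mem_empty_iff_false, false_iff, not_le]
    linarith
  obtain ⟨φ, u, v, hu, huv, hv⟩ := geometric_hahn_banach_compact_closed (convex_convexHull ℝ _)
    hS.isCompact_convexHull (convex_convexHull ℝ _) hS.isClosed_convexHull_compl hd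
  have hφ (c : ℕ × ℕ) : φ (toR2 c) = c.1 * φ (1, 0) + c.2 * φ (0, 1) := by
    have hc : toR2 c = (c.1 : ℝ) • ((1 : ℝ), (0 : ℝ)) + (c.2 : ℝ) • ((0 : ℝ), (1 : ℝ)) := by
      simp [toR2]
    rw [hc, map_add, map_smul, map_smul, smul_eq_mul, smul_eq_mul]
  replace hu : ∀ c ∈ S, (c.1 : ℝ) * φ (1, 0) + c.2 * φ (0, 1) < u := fun c hc =>
    hφ c ▸ hu _ (subset_convexHull ℝ _ ⟨c, hc, rfl⟩)
  replace hv : ∀ c ∈ posQuad \ S, v < (c.1 : ℝ) * φ (1, 0) + c.2 * φ (0, 1) := fun c hc =>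
    hφ c ▸ hv _ (subset_convexHull ℝ _ ⟨c, hc, rfl⟩)
  obtain ⟨N, hN, hNS⟩ := hS.exists_bound
  have h₁₁ := hu _ (hS.one_one_mem_s1 hne)
  have hN₁ : (1 : ℝ) < N := Nat.one_lt_cast.2 (hNS _ (hS.one_one_mem_s1 hne)).1
  have hN0 := hv (N, 1) ⟨⟨hN, le_rfl⟩, fun h => (hNS _ h).1.false⟩
  have h0N := hv (1, N) ⟨⟨le_rfl, hN⟩, fun h => (hNS _ h).2.false⟩
  simp only [Nat.cast_one, one_mul] at h₁₁ hN0 h0N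
  have hA : 0 < φ (1, 0) := by nlinarith
  have hB : 0 < φ (0, 1) := by nlinarith
  refine isTriangularSet_of_forall_mem_iff hA hB (by linarith) hS.2.1 fun c hc =>
    ⟨fun h => (hu c h).le, fun h => by_contra fun hcS => ?_⟩
  linarith [hv c ⟨hc, hcS⟩]

theorem IsPartitionSet.isTriangularSet_iff_disjoint {S : Set (ℕ × ℕ)} (hS : IsPartitionSet S) :
    IsTriangularSet S ↔
      Disjoint (convexHull ℝ (toR2 '' S)) (convexHull ℝ (toR2 '' (posQuad \ S))) :=
  ⟨IsTriangularSet.disjoint_convexHull, hS.isTriangularSet_of_disjoint⟩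

theorem IsPartitionSet.disjoint_convexHull_of_extremePoints {S : Set (ℕ × ℕ)}
    (hS : IsPartitionSet S)
    (h₁ : (convexHull ℝ (toR2 '' S)).extremePoints ℝ ∩ convexHull ℝ (toR2 '' (posQuad \ S)) = ∅)
    (h₂ : (convexHull ℝ (toR2 '' (posQuad \ S))).extremePoints ℝ ∩ convexHull ℝ (toR2 '' S) = ∅) :
    Disjoint (convexHull ℝ (toR2 '' S)) (convexHull ℝ (toR2 '' (posQuad \ S))) := by
  rw [Set.disjoint_iff_inter_eq_empty, ← not_nonempty_iff_eq_empty]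
  intro hKC
  rcases extremePoints_inter_nonempty_or hS.isCompact_convexHull
    (convex_convexHull ℝ _) hS.isClosed_convexHull_compl (convex_convexHull ℝ _)
    (fun _ _ _ hxy hy₁ hy₂ => hS.mk_mem_convexHull_of_le hxy hy₁ hy₂)
    (fun z hz => (convexHull_subset_Ici_one sdiff_subset hz).2)
    (fun z hz t ht => hS.add_mem_convexHull_compl hz ⟨le_rfl, ht⟩) hKC with h | h
  · exact h.ne_empty h₁
  · exact h.ne_empty h₂

/-- a partition is triangular iff no vertex (extreme point) of the
convex hull of its Ferrers diagram lies in the convex hull of the complement,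
and vice versa. -/
theorem stmt1 (S : Set (ℕ × ℕ)) (hS : IsPartitionSet S) :
    IsTriangularSet S ↔
      (Set.extremePoints ℝ (convexHull ℝ (toR2 '' S)) ∩
          convexHull ℝ (toR2 '' (posQuad \ S)) = ∅ ∧
        Set.extremePoints ℝ (convexHull ℝ (toR2 '' (posQuad \ S))) ∩
          convexHull ℝ (toR2 '' S) = ∅) := by
  rw [hS.isTriangularSet_iff_disjoint]
  exact ⟨fun hd => ⟨(hd.mono_left extremePoints_subset).inter_eq,
      (hd.symm.mono_left extremePoints_subset).inter_eq⟩,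
    fun ⟨h₁, h₂⟩ => hS.disjoint_convexHull_of_extremePoints h₁ h₂⟩
end

section
/- Every removable cell of a triangular partition τ is a vertex of the convex hull of τ, and every addable cell of τ is a vertex of the convex hull of ℕ² \ τ. -/
open Set

/-- A strict maximizer of a linear functional over `t` is the unique point of
`convexHull ℝ t` where the functional attains the value `f x`. -/
lemma key_unique (f : (ℝ × ℝ) →ₗ[ℝ] ℝ) (t : Set (ℝ × ℝ)) (x : ℝ × ℝ) (hx : x ∈ t)
    (h : ∀ y ∈ t, y ≠ x → f y < f x) :
    ∀ z ∈ convexHull ℝ t, f x ≤ f z → z = x := by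
  have ht : t = insert x (t \ {x}) := by
    ext y; simp only [Set.mem_insert_iff, Set.mem_diff, Set.mem_singleton_iff]
    constructor
    · intro hy; by_cases hyx : y = x
      · exact Or.inl hyx
      · exact Or.inr ⟨hy, hyx⟩
    · rintro (rfl | ⟨hy, _⟩) <;> [exact hx; exact hy]
  rcases Set.eq_empty_or_nonempty (t \ {x}) with he | hne
  · intro z hz _
    rw [ht, he] at hz
    simpa using hz
  · intro z hz hfz
    rw [ht, convexHull_insert hne] at hz
    rw [mem_convexJoin] at hz
    obtain ⟨x', hx', y, hy, hzseg⟩ := hz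
    rw [Set.mem_singleton_iff] at hx'
    rw [hx'] at hzseg
    have hfy : f y < f x := by
      have hsub : convexHull ℝ (t \ {x}) ⊆ {w | f w < f x} :=
        convexHull_min (fun w hw => h w hw.1 hw.2) (convex_halfSpace_lt f.isLinear (f x))
      exact hsub hy
    obtain ⟨a, b, ha, hb, hab, hz⟩ := hzseg
    by_cases hb0 : b = 0
    · subst hb0; simp at hab; subst hab; simpa using hz.symm
    · exfalso
      have hb' : 0 < b := lt_of_le_of_ne hb (Ne.symm hb0)
      have : f z = a * f x + b * f y := by
        rw [← hz]; simp [map_add, map_smul, smul_eq_mul]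
      have hlt : f z < f x := by
        rw [this]
        calc a * f x + b * f y < a * f x + b * f x := by nlinarith
          _ = f x := by rw [← add_mul, hab, one_mul]
      linarith
  
lemma extreme_of_strict_max (f : (ℝ × ℝ) →ₗ[ℝ] ℝ) (t : Set (ℝ × ℝ)) (x : ℝ × ℝ) (hx : x ∈ t)
    (h : ∀ y ∈ t, y ≠ x → f y < f x) :
    x ∈ Set.extremePoints ℝ (convexHull ℝ t) := by
  rw [mem_extremePoints]
  refine ⟨subset_convexHull ℝ t hx, fun x₁ h₁ x₂ h₂ hseg => ?_⟩
  have hsub : convexHull ℝ t ⊆ {w | f w ≤ f x} := by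
    apply convexHull_min ?_ (convex_halfSpace_le f.isLinear (f x))
    intro w hw
    by_cases hwx : w = x
    · exact le_of_eq (congrArg f hwx)
    · exact (h w hw hwx).le
  have hle : ∀ z ∈ convexHull ℝ t, f z ≤ f x := fun z hz => hsub hz
  obtain ⟨a, b, ha, hb, hab, hxs⟩ := hseg
  have hfx : f x = a * f x₁ + b * f x₂ := by
    rw [← hxs]; simp [map_add, map_smul, smul_eq_mul]
  have h1 : f x ≤ f x₁ := by
    by_contra hcon; push_neg at hcon
    have e1 := mul_lt_mul_of_pos_left hcon ha
    have e2 := mul_le_mul_of_nonneg_left (hle x₂ h₂) hb.le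
    have e3 : a * f x + b * f x = f x := by rw [← add_mul, hab, one_mul]
    linarith
  have h2 : f x ≤ f x₂ := by
    by_contra hcon; push_neg at hcon
    have e1 := mul_lt_mul_of_pos_left hcon hb
    have e2 := mul_le_mul_of_nonneg_left (hle x₁ h₁) ha.le
    have e3 : a * f x + b * f x = f x := by rw [← add_mul, hab, one_mul]
    linarith
  exact ⟨key_unique f t x hx h x₁ h₁ h1, key_unique f t x hx h x₂ h₂ h2⟩

noncomputable def lineF (r s : ℝ) : (ℝ × ℝ) →ₗ[ℝ] ℝ :=
  (1/r) • LinearMap.fst ℝ ℝ ℝ + (1/s) • LinearMap.snd ℝ ℝ ℝ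

lemma lineF_apply (r s : ℝ) (p : ℝ × ℝ) : lineF r s p = p.1 / r + p.2 / s := by
  simp [lineF, div_eq_mul_inv, mul_comm]

lemma toR2_inj : Function.Injective toR2 := by
  intro a b hab
  simp only [toR2, Prod.mk.injEq, Nat.cast_inj] at hab
  exact Prod.ext hab.1 hab.2

/-- removable cells are vertices of Conv(τ), and addable cells are
vertices of Conv(ℕ² \ τ). -/
theorem stmt2 (S : Set (ℕ × ℕ)) (hS : IsTriangularSet S) :
    (∀ c, RemovableCell S c →
        toR2 c ∈ Set.extremePoints ℝ (convexHull ℝ (toR2 '' S))) ∧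
    (∀ c, AddableCell S c →
        toR2 c ∈ Set.extremePoints ℝ (convexHull ℝ (toR2 '' (posQuad \ S)))) := by
  constructor
  · rintro c ⟨hcS, r, s, hr, hs, hdiff⟩
    -- c is in posQuad
    obtain ⟨r0, s0, hr0, hs0, hS0⟩ := hS
    have hcq : 1 ≤ c.1 ∧ 1 ≤ c.2 := by
      have := hS0 ▸ hcS; exact ⟨this.1, this.2.1⟩
    have hcgt : 1 < (c.1 : ℝ) / r + (c.2 : ℝ) / s := by
      have hcn : c ∉ S \ {c} := fun h => h.2 rfl
      rw [hdiff] at hcn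
      simp only [Set.mem_setOf_eq, not_and, not_le] at hcn
      exact hcn hcq.1 hcq.2
    apply extreme_of_strict_max (lineF r s)
    · exact ⟨c, hcS, rfl⟩
    · rintro y ⟨d, hdS, rfl⟩ hne
      have hdc : d ≠ c := fun h => hne (by rw [h])
      have hd : d ∈ S \ {c} := ⟨hdS, hdc⟩
      rw [hdiff] at hd
      rw [lineF_apply, lineF_apply]
      calc (toR2 d).1 / r + (toR2 d).2 / s ≤ 1 := hd.2.2
        _ < (toR2 c).1 / r + (toR2 c).2 / s := hcgt
  · rintro c ⟨⟨hcq, hcS⟩, r, s, hr, hs, hins⟩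
    have hcle : (c.1 : ℝ) / r + (c.2 : ℝ) / s ≤ 1 := by
      have : c ∈ insert c S := Set.mem_insert _ _
      rw [hins] at this; exact this.2.2
    apply extreme_of_strict_max (-(lineF r s))
    · exact ⟨c, ⟨hcq, hcS⟩, rfl⟩
    · rintro y ⟨d, ⟨hdq, hdS⟩, rfl⟩ hne
      have hdc : d ≠ c := fun h => hne (by rw [h])
      have hdn : d ∉ insert c S := by
        intro h; rcases h with h | h; exact hdc h; exact hdS h
      rw [hins] at hdn
      simp only [Set.mem_setOf_eq, not_and, not_le] at hdn
      have hdgt : 1 < (d.1 : ℝ) / r + (d.2 : ℝ) / s := hdn hdq.1 hdq.2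
      simp only [LinearMap.neg_apply, lineF_apply, neg_lt_neg_iff]
      calc (toR2 c).1 / r + (toR2 c).2 / s ≤ 1 := hcle
        _ < (toR2 d).1 / r + (toR2 d).2 / s := hdgt
end

section
/- Let τ be a triangular partition with slope parameters t⁻ = max over cells c of leg(c)/(arm(c)+leg(c)+1) and t⁺ analogous with leg(c)+1 in the numerator. Let c⁻ be the rightmost cell of τ maximizing t⁻·a + (1−t⁻)·b over cells (a,b) ∈ τ, and c⁺ the uppermost cell maximizing t⁺·a + (1−t⁺)·b. Then: if c⁻ = c⁺, this is the unique removable cell of τ; if c⁻ ≠ c⁺, both c⁻ and c⁺ are removable. -/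
open Set

/-- Arm length of a cell: number of cells of `S` strictly to its right in its row. -/
noncomputable def armS (S : Set (ℕ × ℕ)) (c : ℕ × ℕ) : ℕ :=
  {a : ℕ | (a, c.2) ∈ S ∧ c.1 < a}.ncard

/-- Leg length of a cell: number of cells of `S` strictly above it in its column. -/
noncomputable def legS (S : Set (ℕ × ℕ)) (c : ℕ × ℕ) : ℕ :=
  {b : ℕ | (c.1, b) ∈ S ∧ c.2 < b}.ncard

/-!
For a slope `t` of a partition `S` (a normal `(t, 1 - t)` of a cutting line), every cell outside
`S` lies strictly above every cell of `S` on the form `t x + (1 - t) y`. Hence a cell at which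
this form attains a strict maximum on `S` is removable: a slightly lower parallel line cuts out
`S` minus that cell. Tilting `t⁻` slightly upwards (resp. `t⁺` downwards) makes `c⁻`
(resp. `c⁺`) such a strict maximum, thanks to the tie-breaking rule defining it.

Conversely, interpolating between cutting lines of `S \ {c}` and of `S` yields a cutting line
of `S` through a removable cell `c`, i.e. a slope `t ∈ (t⁻, t⁺)` at which `c` is maximal. As
the form is affine in `t`, a cell that loses to `c⁻ = c⁺` at both `t⁻` and `t⁺` yet wins at `t`
must be `c⁻` itself.
-/

open Filter Topology

noncomputable def slopeForm (t : ℝ) (c : ℕ × ℕ) : ℝ := t * c.1 + (1 - t) * c.2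

def cutSet (t M : ℝ) : Set (ℕ × ℕ) := {c ∈ posQuad | slopeForm t c ≤ M}

lemma isTriangularSet_iff_exists_cutSet {S : Set (ℕ × ℕ)} :
    IsTriangularSet S ↔ ∃ t M : ℝ, 0 < t ∧ t < 1 ∧ S = cutSet t M := by
  constructor
  · rintro ⟨r, s, hr, hs, rfl⟩
    refine ⟨s / (r + s), r * s / (r + s), by positivity, ?_, ?_⟩
    · rw [div_lt_one (by positivity)]; linarith
    · ext c
      simp only [cutSet, posQuad, slopeForm, mem_ofPred_eq, and_assoc]
      refine and_congr_right fun _ => and_congr_right fun _ => ?_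
      rw [div_add_div _ _ hr.ne' hs.ne', div_le_one (by positivity), one_sub_div (by positivity),
        div_mul_eq_mul_div, div_mul_eq_mul_div, ← add_div, div_le_div_iff_of_pos_right (by positivity)]
      ring_nf
  · rintro ⟨t, M, ht0, ht1, rfl⟩
    rcases le_or_gt M 0 with hM | hM
    · refine ⟨1 / 2, 1 / 2, by norm_num, by norm_num, ?_⟩
      ext c
      simp only [cutSet, posQuad, slopeForm, mem_ofPred_eq, and_assoc]
      refine and_congr_right fun h1 => and_congr_right fun h2 => ?_
      have h1 : (1 : ℝ) ≤ c.1 := by exact_mod_cast h1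
      have h2 : (1 : ℝ) ≤ c.2 := by exact_mod_cast h2
      constructor <;> intro h <;> nlinarith
    · refine ⟨M / t, M / (1 - t), by positivity, div_pos hM (by linarith), ?_⟩
      ext c
      simp only [cutSet, posQuad, slopeForm, mem_ofPred_eq, and_assoc]
      refine and_congr_right fun _ => and_congr_right fun _ => ?_
      rw [div_div_eq_mul_div, div_div_eq_mul_div, ← add_div, div_le_one hM]
      ring_nf

lemma isPartitionSet_cutSet {t M : ℝ} (ht0 : 0 < t) (ht1 : t < 1) :
    IsPartitionSet (cutSet t M) := by
  refine ⟨?_, fun c hc => hc.1, ?_⟩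
  · refine (finite_Icc ((0, 0) : ℕ × ℕ) (⌈M / t⌉₊, ⌈M / (1 - t)⌉₊)).subset ?_
    rintro c ⟨-, hc⟩
    have hx : (0 : ℝ) ≤ c.1 := c.1.cast_nonneg
    have hy : (0 : ℝ) ≤ c.2 := c.2.cast_nonneg
    unfold slopeForm at hc
    refine ⟨Prod.mk_le_mk.2 ⟨c.1.zero_le, c.2.zero_le⟩, Prod.mk_le_mk.2 ⟨?_, ?_⟩⟩
    · exact Nat.cast_le.1 <| ((le_div_iff₀ ht0).2 (by nlinarith)).trans (Nat.le_ceil _)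
    · exact Nat.cast_le.1 <|
        ((le_div_iff₀ (sub_pos.2 ht1)).2 (by nlinarith)).trans (Nat.le_ceil _)
  · rintro e ⟨-, he⟩ x y hx hxe hy hye
    refine ⟨⟨hx, hy⟩, le_trans ?_ he⟩
    have hxe : (x : ℝ) ≤ e.1 := by exact_mod_cast hxe
    have hye : (y : ℝ) ≤ e.2 := by exact_mod_cast hye
    unfold slopeForm
    nlinarith

lemma Set.Finite.eq_Ioc_add_ncard {T : Set ℕ} (hT : T.Finite) {u : ℕ} (hgt : ∀ a ∈ T, u < a)
    (hdown : ∀ a ∈ T, ∀ b, u < b → b ≤ a → b ∈ T) : T = Ioc u (u + T.ncard) := by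
  rcases T.eq_empty_or_nonempty with rfl | hne
  · simp
  obtain ⟨m, hm, hmax⟩ := T.exists_max_image id hT hne
  have hTm : T = Ioc u m := Subset.antisymm (fun b hb => ⟨hgt b hb, hmax b hb⟩)
    fun b hb => hdown m hm b hb.1 hb.2
  rw [hTm, ncard_Ioc_nat, Nat.add_sub_cancel' (hgt m hm).le]

namespace IsPartitionSet

variable {S : Set (ℕ × ℕ)}

lemma mem_row_iff (hS : IsPartitionSet S) {e : ℕ × ℕ} (he : e ∈ S) {x : ℕ} (hx : 1 ≤ x) :
    (x, e.2) ∈ S ↔ x ≤ e.1 + armS S e := by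
  obtain ⟨hfin, hpos, hdown⟩ := hS
  have he2 : 1 ≤ e.2 := (hpos he).2
  have hrow : {a | (a, e.2) ∈ S ∧ e.1 < a} = Ioc e.1 (e.1 + armS S e) :=
    Finite.eq_Ioc_add_ncard (hfin.preimage (Prod.mk_left_injective e.2).injOn |>.subset
      fun _ ha => ha.1) (fun _ ha => ha.2)
      fun a ha b hb hba => ⟨hdown _ ha.1 b e.2 (by omega) hba he2 le_rfl, hb⟩
  rcases le_or_gt x e.1 with hxe | hxe
  · exact ⟨fun _ => by omega, fun _ => hdown e he x e.2 hx hxe he2 le_rfl⟩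
  · simpa only [mem_ofPred_eq, mem_Ioc, hxe, and_true, true_and, eq_iff_iff]
      using congrArg (x ∈ ·) hrow

lemma preimage_swap (hS : IsPartitionSet S) : IsPartitionSet (Prod.swap ⁻¹' S) :=
  ⟨hS.1.preimage Prod.swap_injective.injOn, fun _ hc => ⟨(hS.2.1 hc).2, (hS.2.1 hc).1⟩,
    fun c hc a b ha hac hb hbc => hS.2.2 c.swap hc b a hb hbc ha hac⟩

lemma mem_col_iff (hS : IsPartitionSet S) {e : ℕ × ℕ} (he : e ∈ S) {y : ℕ} (hy : 1 ≤ y) :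
    (e.1, y) ∈ S ↔ y ≤ e.2 + legS S e :=
  hS.preimage_swap.mem_row_iff (e := e.swap) he hy

end IsPartitionSet

/-- The cell-wise form of the Bergeron–Mazin condition `t⁻ < t < t⁺`. -/
def IsSlope (S : Set (ℕ × ℕ)) (t : ℝ) : Prop :=
  ∀ e ∈ S, (legS S e : ℝ) < t * (armS S e + legS S e + 1) ∧
    t * (armS S e + legS S e + 1) < legS S e + 1

lemma slopeForm_swap (t : ℝ) (c : ℕ × ℕ) : slopeForm (1 - t) c.swap = slopeForm t c := by
  simp only [slopeForm, Prod.fst_swap, Prod.snd_swap]; ring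

lemma isSlope_cutSet {t M : ℝ} (ht0 : 0 < t) (ht1 : t < 1) : IsSlope (cutSet t M) t := by
  intro e he
  have hS := isPartitionSet_cutSet (M := M) ht0 ht1
  have he1 : 1 ≤ e.1 := he.1.1
  have he2 : 1 ≤ e.2 := he.1.2
  set a := armS (cutSet t M) e
  set l := legS (cutSet t M) e
  have row_end : slopeForm t (e.1 + a, e.2) ≤ M := ((hS.mem_row_iff he (by omega)).2 le_rfl).2
  have row_out : M < slopeForm t (e.1 + a + 1, e.2) :=
    not_le.1 fun h => by
      have := (hS.mem_row_iff he (x := e.1 + a + 1) (by omega)).1 ⟨⟨by omega, he2⟩, h⟩; omega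
  have col_end : slopeForm t (e.1, e.2 + l) ≤ M := ((hS.mem_col_iff he (by omega)).2 le_rfl).2
  have col_out : M < slopeForm t (e.1, e.2 + l + 1) :=
    not_le.1 fun h => by
      have := (hS.mem_col_iff he (y := e.2 + l + 1) (by omega)).1 ⟨⟨he1, by omega⟩, h⟩; omega
  simp only [slopeForm] at row_end row_out col_end col_out
  push_cast at row_end row_out col_end col_out
  constructor <;> nlinarith

lemma IsSlope.mem_Ioo {S : Set (ℕ × ℕ)} {t : ℝ} (ht : IsSlope S t) {e : ℕ × ℕ} (he : e ∈ S) :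
    t ∈ Ioo 0 1 := by
  obtain ⟨h1, h2⟩ := ht e he
  have ha : (0 : ℝ) ≤ armS S e := Nat.cast_nonneg _
  have hl : (0 : ℝ) ≤ legS S e := Nat.cast_nonneg _
  constructor <;> nlinarith

lemma IsSlope.preimage_swap {S : Set (ℕ × ℕ)} {t : ℝ} (ht : IsSlope S t) :
    IsSlope (Prod.swap ⁻¹' S) (1 - t) := by
  intro e he
  obtain ⟨h1, h2⟩ := ht e.swap he
  change (armS S e.swap : ℝ) < (1 - t) * (legS S e.swap + armS S e.swap + 1) ∧
    (1 - t) * (legS S e.swap + armS S e.swap + 1) < armS S e.swap + 1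
  constructor <;> linarith

section Separation

variable {S : Set (ℕ × ℕ)} {t : ℝ} {d e : ℕ × ℕ}

/-- The cell `(d.1, e.2)` has `e` in its arm and `d` beyond its leg, so its slope
inequality `t (a + l + 1) < l + 1` separates `e` from `d`. -/
lemma IsSlope.slopeForm_lt_of_above (hS : IsPartitionSet S) (ht : IsSlope S t) (he : e ∈ S)
    (hdS : d ∉ S) (hd1 : 1 ≤ d.1) (hx : d.1 ≤ e.1) (hy : e.2 < d.2) :
    slopeForm t e < slopeForm t d := by
  have he2 : 1 ≤ e.2 := (hS.2.1 he).2
  have hg : (d.1, e.2) ∈ S := hS.2.2 e he d.1 e.2 hd1 hx he2 le_rfl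
  have harm : e.1 ≤ d.1 + armS S (d.1, e.2) := (hS.mem_row_iff hg (by omega)).1 he
  have hleg : e.2 + legS S (d.1, e.2) < d.2 :=
    not_le.1 fun h => hdS ((hS.mem_col_iff hg (by omega)).2 h)
  have harm : (e.1 : ℝ) ≤ d.1 + armS S (d.1, e.2) := by exact_mod_cast harm
  have hleg : (e.2 : ℝ) + legS S (d.1, e.2) + 1 ≤ d.2 := by exact_mod_cast hleg
  obtain ⟨ht0, ht1⟩ := ht.mem_Ioo he
  have := (ht _ hg).2
  unfold slopeForm
  nlinarith

lemma IsSlope.slopeForm_lt (hS : IsPartitionSet S) (ht : IsSlope S t) (he : e ∈ S)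
    (hd : d ∈ posQuad) (hdS : d ∉ S) : slopeForm t e < slopeForm t d := by
  obtain ⟨ht0, ht1⟩ := ht.mem_Ioo he
  rcases le_or_gt d.1 e.1 with hx | hx <;> rcases le_or_gt d.2 e.2 with hy | hy
  · exact absurd (hS.2.2 e he d.1 d.2 hd.1 hx hd.2 hy) hdS
  · exact ht.slopeForm_lt_of_above hS he hdS hd.1 hx hy
  · rw [← slopeForm_swap, ← slopeForm_swap t d]
    exact ht.preimage_swap.slopeForm_lt_of_above hS.preimage_swap he hdS hd.2 hy hx
  · have hx : (e.1 : ℝ) + 1 ≤ d.1 := by exact_mod_cast hx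
    have hy : (e.2 : ℝ) + 1 ≤ d.2 := by exact_mod_cast hy
    unfold slopeForm
    nlinarith

end Separation

lemma IsSlope.removableCell {S : Set (ℕ × ℕ)} {t : ℝ} {c : ℕ × ℕ} (hS : IsPartitionSet S)
    (ht : IsSlope S t) (hc : c ∈ S) (hmax : ∀ e ∈ S, e ≠ c → slopeForm t e < slopeForm t c) :
    RemovableCell S c := by
  have hbelow : ∀ᶠ M in 𝓝[<] slopeForm t c, ∀ e ∈ S \ {c}, slopeForm t e < M :=
    (eventually_all_finite (hS.1.subset sdiff_subset)).2 fun e he =>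
      eventually_nhdsWithin_of_eventually_nhds (eventually_gt_nhds (hmax e he.1 he.2))
  obtain ⟨M, hM, hMc⟩ := (hbelow.and self_mem_nhdsWithin).exists
  obtain ⟨ht0, ht1⟩ := ht.mem_Ioo hc
  refine ⟨hc, isTriangularSet_iff_exists_cutSet.2 ⟨t, M, ht0, ht1, ?_⟩⟩
  ext d
  refine ⟨fun hd => ⟨hS.2.1 hd.1, (hM d hd).le⟩, fun ⟨hd, hdM⟩ => ⟨?_, ?_⟩⟩
  · by_contra hdS
    exact lt_asymm (hdM.trans_lt hMc) (ht.slopeForm_lt hS hc hd hdS)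
  · rintro rfl
    exact lt_irrefl _ (hdM.trans_lt hMc)

lemma slopeForm_convexCombination_sub (θ t₁ t₂ M₁ M₂ : ℝ) (d : ℕ × ℕ) :
    slopeForm ((1 - θ) * t₂ + θ * t₁) d - ((1 - θ) * M₂ + θ * M₁) =
      (1 - θ) * (slopeForm t₂ d - M₂) + θ * (slopeForm t₁ d - M₁) := by
  simp only [slopeForm]; ring

/-- Sliding the cutting line of `S \ {c}` towards that of `S`, it first reaches `c` while
still cutting out exactly `S`. -/
lemma exists_cutSet_through {S : Set (ℕ × ℕ)} {c : ℕ × ℕ} {t₁ t₂ M₁ M₂ : ℝ}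
    (ht₁ : t₁ ∈ Ioo (0 : ℝ) 1) (ht₂ : t₂ ∈ Ioo (0 : ℝ) 1) (hS : S = cutSet t₁ M₁)
    (hSc : S \ {c} = cutSet t₂ M₂) (hc : c ∈ S) :
    ∃ t M, t ∈ Ioo (0 : ℝ) 1 ∧ S = cutSet t M ∧ slopeForm t c = M := by
  have hcpos : c ∈ posQuad := (hS ▸ hc).1
  set g₁ := slopeForm t₁ c - M₁
  set g₂ := slopeForm t₂ c - M₂
  have hg₁ : g₁ ≤ 0 := sub_nonpos.2 (hS ▸ hc).2
  have hg₂ : 0 < g₂ := sub_pos.2 <| not_le.1 fun h =>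
    (hSc.symm ▸ (⟨hcpos, h⟩ : c ∈ cutSet t₂ M₂) : c ∈ S \ {c}).2 rfl
  set θ := g₂ / (g₂ - g₁)
  have hθ0 : 0 < θ := div_pos hg₂ (by linarith)
  have hθ1 : θ ≤ 1 := (div_le_one (by linarith)).2 (by linarith)
  have hθc : (1 - θ) * g₂ + θ * g₁ = 0 := by
    linear_combination -div_mul_cancel₀ g₂ (by linarith : g₂ - g₁ ≠ 0)
  refine ⟨(1 - θ) * t₂ + θ * t₁, (1 - θ) * M₂ + θ * M₁, ⟨by nlinarith [ht₁.1, ht₂.1],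
    by nlinarith [ht₁.2, ht₂.2]⟩, ?_, ?_⟩
  · ext d
    have h₁ : d ∈ S ↔ d ∈ posQuad ∧ slopeForm t₁ d ≤ M₁ := by rw [hS]; rfl
    have h₂ : d ∈ S \ {c} ↔ d ∈ posQuad ∧ slopeForm t₂ d ≤ M₂ := by rw [hSc]; rfl
    have key := slopeForm_convexCombination_sub θ t₁ t₂ M₁ M₂ d
    refine ⟨fun hd => ⟨(h₁.1 hd).1, ?_⟩, fun ⟨hdpos, hdM⟩ => ?_⟩
    · rcases eq_or_ne d c with rfl | hdc
      · linarith
      · nlinarith [(h₁.1 hd).2, (h₂.1 ⟨hd, hdc⟩).2]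
    · by_contra hdS
      have hd₁ : M₁ < slopeForm t₁ d := not_le.1 fun h => hdS (h₁.2 ⟨hdpos, h⟩)
      have hd₂ : M₂ < slopeForm t₂ d := not_le.1 fun h => hdS (h₂.2 ⟨hdpos, h⟩).1
      nlinarith
  · linarith [slopeForm_convexCombination_sub θ t₁ t₂ M₁ M₂ c]

lemma IsTriangularSet.isPartitionSet {S : Set (ℕ × ℕ)} (hS : IsTriangularSet S) :
    IsPartitionSet S := by
  obtain ⟨t, M, ht0, ht1, rfl⟩ := isTriangularSet_iff_exists_cutSet.1 hS
  exact isPartitionSet_cutSet ht0 ht1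

lemma IsTriangularSet.exists_isSlope {S : Set (ℕ × ℕ)} (hS : IsTriangularSet S) :
    ∃ t, IsSlope S t := by
  obtain ⟨t, M, ht0, ht1, rfl⟩ := isTriangularSet_iff_exists_cutSet.1 hS
  exact ⟨t, isSlope_cutSet ht0 ht1⟩

lemma RemovableCell.exists_isSlope_forall_le {S : Set (ℕ × ℕ)} {c : ℕ × ℕ}
    (hS : IsTriangularSet S) (hc : RemovableCell S c) :
    ∃ t, IsSlope S t ∧ ∀ e ∈ S, slopeForm t e ≤ slopeForm t c := by
  obtain ⟨t₁, M₁, ht₁0, ht₁1, hS⟩ := isTriangularSet_iff_exists_cutSet.1 hS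
  obtain ⟨t₂, M₂, ht₂0, ht₂1, hSc⟩ := isTriangularSet_iff_exists_cutSet.1 hc.2
  obtain ⟨t, M, ht, hSt, hcM⟩ :=
    exists_cutSet_through ⟨ht₁0, ht₁1⟩ ⟨ht₂0, ht₂1⟩ hS hSc hc.1
  subst hSt
  exact ⟨t, isSlope_cutSet ht.1 ht.2, fun e he => hcM ▸ he.2⟩

lemma isSlope_iff_mem_Ioo {S : Set (ℕ × ℕ)} {tminus tplus t : ℝ}
    (htm : IsGreatest
      {x : ℝ | ∃ c ∈ S, x = (legS S c : ℝ) / ((armS S c : ℝ) + (legS S c : ℝ) + 1)} tminus)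
    (htp : IsLeast
      {x : ℝ | ∃ c ∈ S, x = ((legS S c : ℝ) + 1) / ((armS S c : ℝ) + (legS S c : ℝ) + 1)} tplus) :
    IsSlope S t ↔ t ∈ Ioo tminus tplus := by
  constructor
  · intro ht
    obtain ⟨⟨cm, hcm, rfl⟩, ⟨cp, hcp, rfl⟩⟩ := And.intro htm.1 htp.1
    exact ⟨(div_lt_iff₀ (by positivity)).2 (ht cm hcm).1,
      (lt_div_iff₀ (by positivity)).2 (ht cp hcp).2⟩
  · rintro ⟨htm', htp'⟩ e he
    have hpos : (0 : ℝ) < armS S e + legS S e + 1 := by positivity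
    exact ⟨((div_le_iff₀ hpos).1 (htm.2 ⟨e, he, rfl⟩)).trans_lt (by gcongr),
      (mul_lt_mul_of_pos_right htp' hpos).trans_le ((le_div_iff₀ hpos).1 (htp.2 ⟨e, he, rfl⟩))⟩

lemma exists_strictMax_of_rightmost {S : Set (ℕ × ℕ)} {c : ℕ × ℕ} {t₀ T : ℝ} (hS : S.Finite)
    (ht₀ : t₀ ∈ Ico (0 : ℝ) 1) (hT : t₀ < T) (hmax : ∀ e ∈ S, slopeForm t₀ e ≤ slopeForm t₀ c)
    (htie : ∀ e ∈ S, slopeForm t₀ e = slopeForm t₀ c → e.1 ≤ c.1) :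
    ∃ t ∈ Ioo t₀ T, ∀ e ∈ S, e ≠ c → slopeForm t e < slopeForm t c := by
  have hnear : ∀ᶠ t in 𝓝[>] t₀, ∀ e ∈ S, e ≠ c → slopeForm t e < slopeForm t c := by
    refine (eventually_all_finite hS).2 fun e he => ?_
    rcases (hmax e he).lt_or_eq with hlt | heq
    · have hcont : Continuous fun t => slopeForm t c - slopeForm t e := by
        unfold slopeForm; fun_prop
      filter_upwards [eventually_nhdsWithin_of_eventually_nhds
        (hcont.continuousAt.eventually (eventually_gt_nhds (sub_pos.2 hlt)))] with t ht _
      exact sub_pos.1 ht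
    · filter_upwards [self_mem_nhdsWithin] with t (ht : t₀ < t) hne
      obtain ⟨ht₀0, ht₀1⟩ := ht₀
      -- on a tie at `t₀` the cell `e` lies strictly left of `c`, so increasing `t` favours `c`
      have hx : e.1 < c.1 := (htie e he heq).lt_of_ne fun hx => hne <| Prod.ext hx <| by
        unfold slopeForm at heq
        rw [hx] at heq
        exact_mod_cast mul_left_cancel₀ (sub_pos.2 ht₀1).ne' (add_left_cancel heq)
      have hx : (e.1 : ℝ) + 1 ≤ c.1 := by exact_mod_cast hx
      unfold slopeForm at heq ⊢
      nlinarith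
  obtain ⟨t, ht, htT⟩ := (hnear.and (Ioo_mem_nhdsGT hT)).exists
  exact ⟨t, htT, ht⟩

lemma exists_strictMax_of_uppermost {S : Set (ℕ × ℕ)} {c : ℕ × ℕ} {t₀ T : ℝ} (hS : S.Finite)
    (ht₀ : t₀ ∈ Ioc (0 : ℝ) 1) (hT : T < t₀) (hmax : ∀ e ∈ S, slopeForm t₀ e ≤ slopeForm t₀ c)
    (htie : ∀ e ∈ S, slopeForm t₀ e = slopeForm t₀ c → e.2 ≤ c.2) :
    ∃ t ∈ Ioo T t₀, ∀ e ∈ S, e ≠ c → slopeForm t e < slopeForm t c := by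
  have hswap (t : ℝ) (e : ℕ × ℕ) : slopeForm (1 - t) e = slopeForm t e.swap := by
    rw [← slopeForm_swap, sub_sub_cancel]
  obtain ⟨t, ht, hmax'⟩ := exists_strictMax_of_rightmost (S := Prod.swap ⁻¹' S) (c := c.swap)
    (hS.preimage Prod.swap_injective.injOn) ⟨by linarith [ht₀.2], by linarith [ht₀.1]⟩
    (sub_lt_sub_left hT 1) (fun e he => by rw [hswap, hswap]; exact hmax _ he)
    (fun e he heq => htie _ he (by rwa [hswap, hswap] at heq))
  refine ⟨1 - t, ⟨by linarith [ht.2], by linarith [ht.1]⟩, fun e he hne => ?_⟩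
  rw [hswap, hswap]
  exact hmax' e.swap (by simpa using he) (by simpa using hne)

lemma eq_of_slopeForm_le {c c' : ℕ × ℕ} {t₁ t t₂ : ℝ} (ht : t ∈ Ioo t₁ t₂)
    (h₁ : slopeForm t₁ c ≤ slopeForm t₁ c') (h₂ : slopeForm t₂ c ≤ slopeForm t₂ c')
    (h : slopeForm t c' ≤ slopeForm t c) : c = c' := by
  unfold slopeForm at h₁ h₂ h
  obtain ⟨ht₁, ht₂⟩ := ht
  -- `s ↦ slopeForm s c - slopeForm s c'` is affine, `≤ 0` at `t₁, t₂` and `≥ 0` in between,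
  -- hence identically zero
  have hslope : (c.1 : ℝ) - c'.1 - (c.2 - c'.2) = 0 := by nlinarith
  have hy : (c.2 : ℝ) = c'.2 := by
    linarith [congrArg (t₁ * ·) hslope, congrArg (t * ·) hslope]
  have hx : (c.1 : ℝ) = c'.1 := by linarith
  exact Prod.ext (by exact_mod_cast hx) (by exact_mod_cast hy)

theorem stmt4_general (S : Set (ℕ × ℕ)) (hS : IsTriangularSet S)
    (tminus tplus : ℝ)
    (htm : IsGreatest
      {x : ℝ | ∃ c ∈ S, x = (legS S c : ℝ) / ((armS S c : ℝ) + (legS S c : ℝ) + 1)} tminus)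
    (htp : IsLeast
      {x : ℝ | ∃ c ∈ S, x = ((legS S c : ℝ) + 1) / ((armS S c : ℝ) + (legS S c : ℝ) + 1)} tplus)
    (cm cp : ℕ × ℕ)
    (hcm : cm ∈ S ∧
      (∀ c ∈ S, tminus * (c.1 : ℝ) + (1 - tminus) * (c.2 : ℝ) ≤
        tminus * (cm.1 : ℝ) + (1 - tminus) * (cm.2 : ℝ)) ∧
      ∀ c ∈ S, tminus * (c.1 : ℝ) + (1 - tminus) * (c.2 : ℝ) =
        tminus * (cm.1 : ℝ) + (1 - tminus) * (cm.2 : ℝ) → c.1 ≤ cm.1)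
    (hcp : cp ∈ S ∧
      (∀ c ∈ S, tplus * (c.1 : ℝ) + (1 - tplus) * (c.2 : ℝ) ≤
        tplus * (cp.1 : ℝ) + (1 - tplus) * (cp.2 : ℝ)) ∧
      ∀ c ∈ S, tplus * (c.1 : ℝ) + (1 - tplus) * (c.2 : ℝ) =
        tplus * (cp.1 : ℝ) + (1 - tplus) * (cp.2 : ℝ) → c.2 ≤ cp.2) :
    (cm = cp → RemovableCell S cm ∧ ∀ c, RemovableCell S c → c = cm) ∧
    (cm ≠ cp → RemovableCell S cm ∧ RemovableCell S cp) := by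
  obtain ⟨hcmS, hcm_max, hcm_tie⟩ := hcm
  obtain ⟨hcpS, hcp_max, hcp_tie⟩ := hcp
  have hpart := hS.isPartitionSet
  have hslope {t : ℝ} : IsSlope S t ↔ t ∈ Ioo tminus tplus := isSlope_iff_mem_Ioo htm htp
  obtain ⟨t₁, ht₁⟩ := hS.exists_isSlope
  obtain ⟨htm_lt, hlt_tp⟩ := hslope.1 ht₁
  have htm0 : 0 ≤ tminus := by
    obtain ⟨c, -, rfl⟩ := htm.1
    positivity
  have htp1 : tplus ≤ 1 := by
    obtain ⟨c, -, rfl⟩ := htp.1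
    rw [div_le_one (by positivity)]
    linarith [(armS S c).cast_nonneg (α := ℝ)]
  have hRm : RemovableCell S cm := by
    obtain ⟨t, ht, hmax⟩ := exists_strictMax_of_rightmost hpart.1 ⟨htm0, by linarith⟩
      (htm_lt.trans hlt_tp) hcm_max hcm_tie
    exact (hslope.2 ht).removableCell hpart hcmS hmax
  have hRp : RemovableCell S cp := by
    obtain ⟨t, ht, hmax⟩ := exists_strictMax_of_uppermost hpart.1 ⟨by linarith, htp1⟩
      (htm_lt.trans hlt_tp) hcp_max hcp_tie
    exact (hslope.2 ht).removableCell hpart hcpS hmax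
  refine ⟨fun hcc => ⟨hRm, fun c hc => ?_⟩, fun _ => ⟨hRm, hRp⟩⟩
  subst hcc
  obtain ⟨t, ht, hmax⟩ := hc.exists_isSlope_forall_le hS
  exact eq_of_slopeForm_le (hslope.1 ht) (hcm_max c hc.1) (hcp_max c hc.1) (hmax cm hcmS)

/-- with t⁻, t⁺ the extremal slope parameters, c⁻ the rightmost cell
maximizing t⁻x + (1−t⁻)y over S and c⁺ the uppermost cell maximizing
t⁺x + (1−t⁺)y, if c⁻ = c⁺ it is the unique removable cell, and otherwise both
c⁻ and c⁺ are removable. -/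
theorem stmt4 (S : Set (ℕ × ℕ)) (hS : IsTriangularSet S) (hne : S.Nonempty)
    (tminus tplus : ℝ)
    (htm : IsGreatest
      {x : ℝ | ∃ c ∈ S, x = (legS S c : ℝ) / ((armS S c : ℝ) + (legS S c : ℝ) + 1)} tminus)
    (htp : IsLeast
      {x : ℝ | ∃ c ∈ S, x = ((legS S c : ℝ) + 1) / ((armS S c : ℝ) + (legS S c : ℝ) + 1)} tplus)
    (cm cp : ℕ × ℕ)
    (hcm : cm ∈ S ∧
      (∀ c ∈ S, tminus * (c.1 : ℝ) + (1 - tminus) * (c.2 : ℝ) ≤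
        tminus * (cm.1 : ℝ) + (1 - tminus) * (cm.2 : ℝ)) ∧
      ∀ c ∈ S, tminus * (c.1 : ℝ) + (1 - tminus) * (c.2 : ℝ) =
        tminus * (cm.1 : ℝ) + (1 - tminus) * (cm.2 : ℝ) → c.1 ≤ cm.1)
    (hcp : cp ∈ S ∧
      (∀ c ∈ S, tplus * (c.1 : ℝ) + (1 - tplus) * (c.2 : ℝ) ≤
        tplus * (cp.1 : ℝ) + (1 - tplus) * (cp.2 : ℝ)) ∧
      ∀ c ∈ S, tplus * (c.1 : ℝ) + (1 - tplus) * (c.2 : ℝ) =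
        tplus * (cp.1 : ℝ) + (1 - tplus) * (cp.2 : ℝ) → c.2 ≤ cp.2) :
    (cm = cp → RemovableCell S cm ∧ ∀ c, RemovableCell S c → c = cm) ∧
    (cm ≠ cp → RemovableCell S cm ∧ RemovableCell S cp) :=
  stmt4_general S hS tminus tplus htm htp cm cp hcm hcp
end

section
/- For any two triangular partitions τ and ν, their join in the lattice of triangular partitions ordered by containment is ℕ² ∩ Conv(τ ∪ ν), and their meet is ℕ² \ (ℕ² ∩ Conv(ℕ² \ (τ ∩ ν))). -/
open Set

/-- The poset of triangular partitions ordered by containment. -/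
abbrev TriPart := {S : Set (ℕ × ℕ) // IsTriangularSet S}

/-!
Both halves reduce to one criterion: a bounded set `S` of cells is triangular as soon as the
convex hull of `S` misses the convex hull of the remaining cells of a slightly larger box, because
a line separating the two hulls (Hahn–Banach) must have positive intercepts.

The disjointness comes from a planar lemma. Let `A` be a finite `⊓`-closed set outside a convex
upper set `U`, and let `B ⊆ U` avoid `conv A`. If a point of `conv B` lay below a point of
`conv A`, let `w₀` be a point of `conv A` above it with maximal coordinate sum. A supporting line
of `conv A` at `w₀` has nonnegative normal, and its face contains a cell `a` of `A` to the upper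
left of `w₀` and a cell `a'` to the lower right. Some `b ∈ B` lies on or below this line. Either
`b` is under the chord `[a, a']` and above `a ⊓ a'`, hence in `conv A`, or the segment
`[b, w₀] ⊆ U` passes below `a` or `a'`, which puts that cell in `U`.

For the join, `A = τ ∪ ν` and `U` is the region strictly above both lines. The meet is the mirror
image under `p ↦ -p`, with `A` the cells of the box outside `τ ∩ ν` and `U` the region on or below
both lines.
-/

lemma strongDual_apply_prod (f : StrongDual ℝ (ℝ × ℝ)) (p : ℝ × ℝ) :
    f p = f (1, 0) * p.1 + f (0, 1) * p.2 := by
  have hp : p = p.1 • ((1 : ℝ), (0 : ℝ)) + p.2 • ((0 : ℝ), (1 : ℝ)) := by ext <;> simp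
  conv_lhs => rw [hp]
  rw [map_add, map_smul, map_smul, smul_eq_mul, smul_eq_mul, mul_comm, mul_comm p.2]

lemma exists_mem_segment_apply_eq {E : Type*} [AddCommGroup E] [Module ℝ E] (φ : E →ₗ[ℝ] ℝ)
    {x y : E} {t : ℝ} (hx : φ x ≤ t) (hy : t ≤ φ y) : ∃ z ∈ segment ℝ x y, φ z = t := by
  have ht : t ∈ φ.toAffineMap '' segment ℝ x y := by
    rw [image_segment]
    exact (segment_eq_Icc (hx.trans hy)).symm ▸ ⟨hx, hy⟩
  obtain ⟨z, hz, rfl⟩ := ht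
  exact ⟨z, hz, rfl⟩

lemma mem_convexHull_sep_of_le {E : Type*} [AddCommGroup E] [Module ℝ E] {s : Set E}
    (g : E →ₗ[ℝ] ℝ) {c : ℝ} (hs : ∀ a ∈ s, g a ≤ c) {x : E} (hx : x ∈ convexHull ℝ s)
    (hgx : g x = c) : x ∈ convexHull ℝ {a ∈ s | g a = c} := by
  have hle : ∀ p ∈ convexHull ℝ s, g p ≤ c := fun p hp =>
    convexHull_min hs (convex_halfSpace_le g.isLinear c) hp
  suffices h : convexHull ℝ s ⊆
      {p | p ∈ convexHull ℝ s ∧ (g p = c → p ∈ convexHull ℝ {a ∈ s | g a = c})} from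
    (h hx).2 hgx
  refine convexHull_min (fun a ha => ⟨subset_convexHull ℝ s ha,
    fun hac => subset_convexHull ℝ _ ⟨ha, hac⟩⟩) ?_
  rintro p ⟨hp, hpc⟩ q ⟨hq, hqc⟩ μ ν hμ hν hμν
  refine ⟨convex_convexHull ℝ s hp hq hμ hν hμν, fun hc => ?_⟩
  simp only [map_add, map_smul, smul_eq_mul] at hc
  have hp₀ : 0 ≤ μ * (c - g p) := mul_nonneg hμ (sub_nonneg.2 (hle p hp))
  have hq₀ : 0 ≤ ν * (c - g q) := mul_nonneg hν (sub_nonneg.2 (hle q hq))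
  have hsum : μ * (c - g p) + ν * (c - g q) = 0 := by linear_combination c * hμν - hc
  rcases hμ.eq_or_lt with rfl | hμ'
  · obtain rfl : ν = 1 := by linarith
    simpa using hqc (by linarith)
  rcases hν.eq_or_lt with rfl | hν'
  · obtain rfl : μ = 1 := by linarith
    simpa using hpc (by linarith)
  have hgp : g p = c := by nlinarith
  have hgq : g q = c := by nlinarith
  exact convex_convexHull ℝ _ (hpc hgp) (hqc hgq) hμ hν hμν

lemma exists_nonneg_supporting_of_not_lt {C : Set (ℝ × ℝ)} (hC : Convex ℝ C) {x : ℝ × ℝ}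
    (hx : x ∈ C) (h : ∀ p ∈ C, ¬ (x.1 < p.1 ∧ x.2 < p.2)) :
    ∃ α β : ℝ, 0 ≤ α ∧ 0 ≤ β ∧ 0 < α + β ∧ ∀ p ∈ C, α * p.1 + β * p.2 ≤ α * x.1 + β * x.2 := by
  have hdisj : Disjoint (Set.Ioi x.1 ×ˢ Set.Ioi x.2) C :=
    Set.disjoint_left.2 fun p hp hpC => h p hpC hp
  obtain ⟨f, u, hfO, hfC⟩ := geometric_hahn_banach_open ((convex_Ioi _).prod (convex_Ioi _))
    (isOpen_Ioi.prod isOpen_Ioi) hC hdisj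
  have hcl : ∀ p, x ≤ p → f p ≤ u := by
    intro p hp
    refine closure_minimal (fun q hq => (hfO q hq).le)
      (isClosed_le f.continuous continuous_const) ?_
    rw [closure_prod_eq, closure_Ioi, closure_Ioi]
    exact hp
  have hux := hfC x hx
  have h10 := hcl (x + (1, 0)) (by simp [Prod.le_def])
  have h01 := hcl (x + (0, 1)) (by simp [Prod.le_def])
  have h11 := hfO (x + (1, 1)) (by simp)
  have hx' := hcl x le_rfl
  have hf := strongDual_apply_prod f
  rw [hf (x + (1, 0))] at h10
  rw [hf (x + (0, 1))] at h01
  rw [hf (x + (1, 1))] at h11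
  rw [hf x] at hux hx'
  simp only [Prod.fst_add, Prod.snd_add] at h10 h01 h11
  refine ⟨-f (1, 0), -f (0, 1), by linarith, by linarith, by linarith, fun p hp => ?_⟩
  have hup := hfC p hp
  rw [hf p] at hup
  linarith

-- `hb` says that `b` lies on or below the line through `a` and `a'`.
lemma mem_of_below_chord {C : Set (ℝ × ℝ)} (hC : Convex ℝ C) {a a' b : ℝ × ℝ}
    (ha : a ∈ C) (ha' : a' ∈ C) (hm : (a.1, a'.2) ∈ C) (h₁ : a.1 < a'.1) (h₂ : a'.2 < a.2)
    (hb₁ : a.1 ≤ b.1) (hb₂ : a'.2 ≤ b.2)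
    (hb : (b.1 - a.1) * (a.2 - a'.2) + (b.2 - a'.2) * (a'.1 - a.1) ≤
      (a'.1 - a.1) * (a.2 - a'.2)) : b ∈ C := by
  set t₁ := (b.2 - a'.2) / (a.2 - a'.2)
  set t₂ := (b.1 - a.1) / (a'.1 - a.1)
  have hd₁ : 0 < a'.1 - a.1 := sub_pos.2 h₁
  have hd₂ : 0 < a.2 - a'.2 := sub_pos.2 h₂
  have e₁ : t₁ * (a.2 - a'.2) = b.2 - a'.2 := div_mul_cancel₀ _ hd₂.ne'
  have e₂ : t₂ * (a'.1 - a.1) = b.1 - a.1 := div_mul_cancel₀ _ hd₁.ne'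
  have ht₁ : 0 ≤ t₁ := div_nonneg (sub_nonneg.2 hb₂) hd₂.le
  have ht₂ : 0 ≤ t₂ := div_nonneg (sub_nonneg.2 hb₁) hd₁.le
  have ht : 0 ≤ 1 - t₁ - t₂ := by
    rw [sub_sub, sub_nonneg, div_add_div _ _ hd₂.ne' hd₁.ne', div_le_one (by positivity)]
    linarith
  have hmem := hC.sum_mem (t := Finset.univ) (w := ![t₁, t₂, 1 - t₁ - t₂])
    (z := ![a, a', (a.1, a'.2)])
    (fun i _ => by fin_cases i <;> simp [ht₁, ht₂, ht])
    (by simp [Fin.sum_univ_three]) (fun i _ => by fin_cases i <;> simp [ha, ha', hm])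
  convert hmem using 1
  simp only [Fin.sum_univ_three, Matrix.cons_val_zero, Matrix.cons_val_one, Matrix.cons_val_two,
    Matrix.head_cons, Matrix.tail_cons]
  ext <;> simp only [Prod.fst_add, Prod.snd_add, Prod.smul_fst, Prod.smul_snd, smul_eq_mul]
  · linear_combination -e₂
  · linear_combination -e₁

lemma exists_le_mem_convexHull_supporting {A : Set (ℝ × ℝ)} (hA : A.Finite) {z w : ℝ × ℝ}
    (hw : w ∈ convexHull ℝ A) (hzw : z ≤ w) :
    ∃ w₀ ∈ convexHull ℝ A, z ≤ w₀ ∧ ∃ α β : ℝ, 0 ≤ α ∧ 0 ≤ β ∧ 0 < α + β ∧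
      ∀ p ∈ convexHull ℝ A, α * p.1 + β * p.2 ≤ α * w₀.1 + β * w₀.2 := by
  obtain ⟨w₀, ⟨hw₀A, hzw₀⟩, hmax⟩ :=
    ((hA.isCompact_convexHull (𝕜 := ℝ)).inter_right isClosed_Ici).exists_isMaxOn ⟨w, hw, hzw⟩
      (f := fun p : ℝ × ℝ => p.1 + p.2) (by fun_prop)
  refine ⟨w₀, hw₀A, hzw₀, exists_nonneg_supporting_of_not_lt (convex_convexHull ℝ A) hw₀A
    fun p hp ⟨h₁, h₂⟩ => ?_⟩
  have : p.1 + p.2 ≤ w₀.1 + w₀.2 := hmax ⟨hp, hzw₀.trans (Prod.le_def.2 ⟨h₁.le, h₂.le⟩)⟩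
  linarith

lemma mem_of_segment_subset_of_fst_le {U : Set (ℝ × ℝ)} (hU : IsUpperSet U) {α β c : ℝ}
    (hβ : 0 < β) {p q a : ℝ × ℝ} (hpq : segment ℝ p q ⊆ U ∩ {x | α * x.1 + β * x.2 ≤ c})
    (hac : α * a.1 + β * a.2 = c) (hp : p.1 ≤ a.1) (hq : a.1 ≤ q.1) : a ∈ U := by
  obtain ⟨r, hr, hr₁⟩ := exists_mem_segment_apply_eq (LinearMap.fst ℝ ℝ ℝ) hp hq
  obtain ⟨hrU, hrc⟩ := hpq hr
  simp only [LinearMap.fst_apply] at hr₁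
  rw [Set.mem_ofPred_eq, hr₁] at hrc
  exact hU (Prod.le_def.2 ⟨hr₁.le, le_of_mul_le_mul_left (by linarith) hβ⟩) hrU

lemma mem_of_segment_subset_of_snd_le {U : Set (ℝ × ℝ)} (hU : IsUpperSet U) {α β c : ℝ}
    (hα : 0 < α) {p q a : ℝ × ℝ} (hpq : segment ℝ p q ⊆ U ∩ {x | α * x.1 + β * x.2 ≤ c})
    (hac : α * a.1 + β * a.2 = c) (hp : p.2 ≤ a.2) (hq : a.2 ≤ q.2) : a ∈ U := by
  obtain ⟨r, hr, hr₂⟩ := exists_mem_segment_apply_eq (LinearMap.snd ℝ ℝ ℝ) hp hq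
  obtain ⟨hrU, hrc⟩ := hpq hr
  simp only [LinearMap.snd_apply] at hr₂
  rw [Set.mem_ofPred_eq, hr₂] at hrc
  exact hU (Prod.le_def.2 ⟨le_of_mul_le_mul_left (by linarith) hα, hr₂.le⟩) hrU

theorem not_le_of_mem_convexHull_of_isUpperSet {A B U : Set (ℝ × ℝ)} (hA : A.Finite)
    (hAinf : ∀ a ∈ A, ∀ a' ∈ A, a ⊓ a' ∈ A) (hUc : Convex ℝ U) (hUu : IsUpperSet U)
    (hAU : ∀ a ∈ A, a ∉ U) (hBU : B ⊆ U) (hBA : ∀ b ∈ B, b ∉ convexHull ℝ A)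
    {z w : ℝ × ℝ} (hz : z ∈ convexHull ℝ B) (hw : w ∈ convexHull ℝ A) : ¬ z ≤ w := by
  intro hzw
  obtain ⟨w₀, hw₀A, hzw₀, α, β, hα, hβ, hαβ, hsupp⟩ :=
    exists_le_mem_convexHull_supporting hA hw hzw
  have hw₀U : w₀ ∈ U := hUu hzw₀ (convexHull_min hBU hUc hz)
  set c := α * w₀.1 + β * w₀.2
  let g : ℝ × ℝ →ₗ[ℝ] ℝ := α • LinearMap.fst ℝ ℝ ℝ + β • LinearMap.snd ℝ ℝ ℝ
  have hg : ∀ p, g p = α * p.1 + β * p.2 := fun _ => rfl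
  obtain ⟨b, hbB, hbz⟩ := (g.concaveOn convex_univ).exists_le_of_mem_convexHull
    (Set.subset_univ _) hz
  have hbc : g b ≤ c := hbz.trans <| by
    rw [hg]
    nlinarith [mul_le_mul_of_nonneg_left hzw₀.1 hα, mul_le_mul_of_nonneg_left hzw₀.2 hβ]
  -- the face of `conv A` on the supporting line has vertices on both sides of `w₀`
  have hface := mem_convexHull_sep_of_le g (fun a ha => hsupp a (subset_convexHull ℝ A ha))
    hw₀A rfl
  obtain ⟨a, ⟨haA, hac⟩, ha₂⟩ := ConvexOn.exists_ge_of_mem_convexHull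
    ((LinearMap.snd ℝ ℝ ℝ).convexOn convex_univ) (Set.subset_univ _) hface
  obtain ⟨a', ⟨ha'A, ha'c⟩, ha'₁⟩ := ConvexOn.exists_ge_of_mem_convexHull
    ((LinearMap.fst ℝ ℝ ℝ).convexOn convex_univ) (Set.subset_univ _) hface
  simp only [LinearMap.fst_apply, LinearMap.snd_apply] at ha₂ ha'₁
  rw [hg] at hac ha'c
  have ha₁ : a.1 < w₀.1 := by
    by_contra! h
    exact hAU a haA (hUu (Prod.le_def.2 ⟨h, ha₂⟩) hw₀U)
  have ha'₂ : a'.2 < w₀.2 := by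
    by_contra! h
    exact hAU a' ha'A (hUu (Prod.le_def.2 ⟨ha'₁, h⟩) hw₀U)
  have hα' : 0 < α := by
    by_contra! h
    nlinarith [mul_pos (by linarith : 0 < β) (sub_pos.2 ha'₂)]
  have hβ' : 0 < β := by
    by_contra! h
    nlinarith [mul_pos (by linarith : 0 < α) (sub_pos.2 ha₁)]
  have hseg : segment ℝ b w₀ ⊆ U ∩ {p | α * p.1 + β * p.2 ≤ c} :=
    (hUc.inter (convex_halfSpace_le g.isLinear c)).segment_subset ⟨hBU hbB, hbc⟩
      ⟨hw₀U, (le_rfl : g w₀ ≤ c)⟩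
  rcases lt_or_ge b.1 a.1 with hb₁ | hb₁
  · exact hAU a haA (mem_of_segment_subset_of_fst_le hUu hβ' hseg hac hb₁.le ha₁.le)
  rcases lt_or_ge b.2 a'.2 with hb₂ | hb₂
  · exact hAU a' ha'A (mem_of_segment_subset_of_snd_le hUu hα' hseg ha'c hb₂.le ha'₂.le)
  have hinf : a ⊓ a' = (a.1, a'.2) :=
    Prod.ext (inf_of_le_left (by linarith)) (inf_of_le_right (by linarith))
  refine hBA b hbB (mem_of_below_chord (convex_convexHull ℝ A) (subset_convexHull ℝ A haA)
    (subset_convexHull ℝ A ha'A) (hinf ▸ subset_convexHull ℝ A (hAinf a haA a' ha'A))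
    (by linarith) (by linarith) hb₁ hb₂ ?_)
  rw [hg] at hbc
  nlinarith

theorem not_le_of_mem_convexHull_of_isLowerSet {A B U : Set (ℝ × ℝ)} (hA : A.Finite)
    (hAsup : ∀ a ∈ A, ∀ a' ∈ A, a ⊔ a' ∈ A) (hUc : Convex ℝ U) (hUl : IsLowerSet U)
    (hAU : ∀ a ∈ A, a ∉ U) (hBU : B ⊆ U) (hBA : ∀ b ∈ B, b ∉ convexHull ℝ A)
    {z w : ℝ × ℝ} (hz : z ∈ convexHull ℝ B) (hw : w ∈ convexHull ℝ A) : ¬ w ≤ z := fun hwz =>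
  not_le_of_mem_convexHull_of_isUpperSet (A := -A) (B := -B) (U := -U) hA.neg
    (fun a ha a' ha' => by simpa [neg_inf] using hAsup _ ha _ ha') hUc.neg hUl.neg
    (fun a ha => hAU _ ha) (Set.neg_subset_neg.2 hBU)
    (fun b hb h => hBA _ hb (by rwa [convexHull_neg] at h))
    (by rw [convexHull_neg]; simpa using hz) (by rw [convexHull_neg]; simpa using hw)
    (neg_le_neg hwz)

lemma toR2_le_toR2 {c d : ℕ × ℕ} : toR2 c ≤ toR2 d ↔ c ≤ d := by
  simp [toR2, Prod.le_def]

lemma toR2_inf (c d : ℕ × ℕ) : toR2 (c ⊓ d) = toR2 c ⊓ toR2 d := by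
  ext <;> simp [toR2]

lemma toR2_sup (c d : ℕ × ℕ) : toR2 (c ⊔ d) = toR2 c ⊔ toR2 d := by
  ext <;> simp [toR2]

lemma inf_mem_Icc_diff {S : Set (ℕ × ℕ)} {X Y : ℕ} (hS : S ⊆ Set.Icc (1, 1) (X, Y))
    {c : ℕ × ℕ} (hc : c ∈ posQuad) (hcS : c ∉ S) :
    c ⊓ (X + 1, Y + 1) ∈ Set.Icc (1, 1) (X + 1, Y + 1) \ S := by
  obtain ⟨hc₁, hc₂⟩ := hc
  refine ⟨⟨le_inf (Prod.le_def.2 ⟨hc₁, hc₂⟩) (Prod.le_def.2 ⟨by omega, by omega⟩),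
    inf_le_right⟩, fun h => hcS ?_⟩
  have hle := (hS h).2
  have heq : c ⊓ (X + 1, Y + 1) = c := by
    simp only [Prod.le_def, Prod.fst_inf, Prod.snd_inf] at hle
    ext <;> simp <;> omega
  rwa [heq] at h

lemma isTriangularSet_empty : IsTriangularSet ∅ := by
  refine ⟨1 / 2, 1 / 2, by norm_num, by norm_num, ?_⟩
  ext c
  simp only [Set.mem_empty_iff_false, false_iff]
  rintro ⟨h₁, h₂, h⟩
  have : (1 : ℝ) ≤ c.1 := by exact_mod_cast h₁
  have : (1 : ℝ) ≤ c.2 := by exact_mod_cast h₂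
  linarith

namespace IsTriangularSet

variable {S : Set (ℕ × ℕ)}

lemma subset_posQuad (hS : IsTriangularSet S) : S ⊆ posQuad := by
  obtain ⟨r, s, -, -, rfl⟩ := hS
  exact fun c hc => ⟨hc.1, hc.2.1⟩

lemma exists_subset_Icc (hS : IsTriangularSet S) : ∃ X Y : ℕ, S ⊆ Set.Icc (1, 1) (X, Y) := by
  obtain ⟨r, s, hr, hs, rfl⟩ := hS
  refine ⟨⌈r⌉₊, ⌈s⌉₊, fun c ⟨h₁, h₂, h⟩ => ⟨Prod.le_def.2 ⟨h₁, h₂⟩, Prod.le_def.2 ⟨?_, ?_⟩⟩⟩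
  · have : (c.1 : ℝ) / r ≤ 1 := by linarith [div_nonneg (Nat.cast_nonneg c.2) hs.le]
    exact_mod_cast ((div_le_one hr).1 this).trans (Nat.le_ceil r)
  · have : (c.2 : ℝ) / s ≤ 1 := by linarith [div_nonneg (Nat.cast_nonneg c.1) hr.le]
    exact_mod_cast ((div_le_one hs).1 this).trans (Nat.le_ceil s)

lemma exists_halfPlane (hS : IsTriangularSet S) :
    ∃ H : Set (ℝ × ℝ), Convex ℝ H ∧ Convex ℝ Hᶜ ∧ IsLowerSet H ∧
      ∀ c ∈ posQuad, c ∈ S ↔ toR2 c ∈ H := by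
  obtain ⟨r, s, hr, hs, rfl⟩ := hS
  have hlin : IsLinearMap ℝ fun p : ℝ × ℝ => p.1 / r + p.2 / s :=
    ⟨fun p q => by simp only [Prod.fst_add, Prod.snd_add]; ring,
      fun a p => by simp only [Prod.smul_fst, Prod.smul_snd, smul_eq_mul]; ring⟩
  refine ⟨{p | p.1 / r + p.2 / s ≤ 1}, convex_halfSpace_le hlin 1, ?_, ?_, ?_⟩
  · simpa only [Set.compl_ofPred, not_le] using convex_halfSpace_gt hlin 1
  · intro p q hqp hp
    have := div_le_div_of_nonneg_right (Prod.le_def.1 hqp).1 hr.le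
    have := div_le_div_of_nonneg_right (Prod.le_def.1 hqp).2 hs.le
    show q.1 / r + q.2 / s ≤ 1
    linarith [show p.1 / r + p.2 / s ≤ 1 from hp]
  · exact fun c hc => ⟨fun h => h.2.2, fun h => ⟨hc.1, hc.2, h⟩⟩

lemma mem_of_le (hS : IsTriangularSet S) {c d : ℕ × ℕ} (hc : c ∈ S) (hd : d ∈ posQuad)
    (hdc : d ≤ c) : d ∈ S := by
  obtain ⟨H, -, -, hH, hSH⟩ := hS.exists_halfPlane
  exact (hSH d hd).2 (hH (toR2_le_toR2.2 hdc) ((hSH c (hS.subset_posQuad hc)).1 hc))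

lemma inf_mem (hS : IsTriangularSet S) {c d : ℕ × ℕ} (hc : c ∈ S) (hd : d ∈ posQuad) :
    c ⊓ d ∈ S :=
  hS.mem_of_le hc ⟨le_min (hS.subset_posQuad hc).1 hd.1, le_min (hS.subset_posQuad hc).2 hd.2⟩
    inf_le_left

end IsTriangularSet

theorem isTriangularSet_of_disjoint_convexHull {S : Set (ℕ × ℕ)} {X Y : ℕ}
    (hS : S ⊆ Set.Icc (1, 1) (X, Y))
    (hdisj : Disjoint (convexHull ℝ (toR2 '' S))
      (convexHull ℝ (toR2 '' (Set.Icc (1, 1) (X + 1, Y + 1) \ S)))) :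
    IsTriangularSet S := by
  rcases S.eq_empty_or_nonempty with rfl | ⟨c₀, hc₀⟩
  · exact isTriangularSet_empty
  set D := Set.Icc (1, 1) (X + 1, Y + 1) \ S
  have hSfin : (toR2 '' S).Finite := ((Set.finite_Icc _ _).subset hS).image _
  have hDfin : (toR2 '' D).Finite := ((Set.finite_Icc _ _).subset Set.sdiff_subset).image _
  obtain ⟨f, u, v, hfu, huv, hfv⟩ := geometric_hahn_banach_compact_closed
    (convex_convexHull ℝ _) (hSfin.isCompact_convexHull (𝕜 := ℝ)) (convex_convexHull ℝ _)
    (hDfin.isCompact_convexHull (𝕜 := ℝ)).isClosed hdisj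
  set α := f (1, 0)
  set β := f (0, 1)
  have hfS : ∀ c ∈ S, α * c.1 + β * c.2 < u := fun c hc => by
    have := hfu _ (subset_convexHull ℝ _ ⟨c, hc, rfl⟩)
    rwa [strongDual_apply_prod] at this
  have hfD : ∀ d ∈ D, v < α * d.1 + β * d.2 := fun d hd => by
    have := hfv _ (subset_convexHull ℝ _ ⟨d, hd, rfl⟩)
    rwa [strongDual_apply_prod] at this
  obtain ⟨h₁, h₂⟩ := Prod.le_def.1 (hS hc₀).1
  obtain ⟨hX, hY⟩ := Prod.le_def.1 (hS hc₀).2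
  have hX' : (c₀.1 : ℝ) + 1 ≤ X + 1 := by exact_mod_cast Nat.succ_le_succ hX
  have hY' : (c₀.2 : ℝ) + 1 ≤ Y + 1 := by exact_mod_cast Nat.succ_le_succ hY
  have hx := hfD (X + 1, c₀.2) ⟨⟨Prod.le_def.2 ⟨by omega, h₂⟩, Prod.le_def.2 ⟨le_rfl, by omega⟩⟩,
    fun h => by have := (hS h).2; simp_all [Prod.le_def]⟩
  have hy := hfD (c₀.1, Y + 1) ⟨⟨Prod.le_def.2 ⟨h₁, by omega⟩, Prod.le_def.2 ⟨by omega, le_rfl⟩⟩,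
    fun h => by have := (hS h).2; simp_all [Prod.le_def]⟩
  have hc₀u := hfS c₀ hc₀
  push_cast at hx hy
  have hα : 0 < α := by nlinarith
  have hβ : 0 < β := by nlinarith
  have hu : 0 < u := by
    have : (1 : ℝ) ≤ c₀.1 := by exact_mod_cast h₁
    have : (1 : ℝ) ≤ c₀.2 := by exact_mod_cast h₂
    nlinarith
  have hdom : ∀ c ∈ posQuad, c ∉ S → v < α * c.1 + β * c.2 := fun c hc hcS => by
    have h := hfD _ (inf_mem_Icc_diff hS hc hcS)
    obtain ⟨h₁, h₂⟩ := Prod.le_def.1 (toR2_le_toR2.2 (inf_le_left : c ⊓ (X + 1, Y + 1) ≤ c))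
    simp only [toR2] at h₁ h₂
    nlinarith [mul_le_mul_of_nonneg_left h₁ hα.le, mul_le_mul_of_nonneg_left h₂ hβ.le]
  refine ⟨u / α, u / β, div_pos hu hα, div_pos hu hβ, ?_⟩
  have hlin : ∀ c : ℕ × ℕ, (c.1 : ℝ) / (u / α) + c.2 / (u / β) ≤ 1 ↔ α * c.1 + β * c.2 ≤ u :=
    fun c => by rw [div_div_eq_mul_div, div_div_eq_mul_div, ← add_div, div_le_one hu]; ring_nf
  ext c
  refine ⟨fun hc => ?_, fun ⟨h₁, h₂, h⟩ => ?_⟩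
  · obtain ⟨h₁, h₂⟩ := Prod.le_def.1 (hS hc).1
    exact ⟨h₁, h₂, (hlin c).2 (hfS c hc).le⟩
  · by_contra hcS
    linarith [(hlin c).1 h, hdom c ⟨h₁, h₂⟩ hcS]

lemma subset_setOf_mem_convexHull {T : Set (ℕ × ℕ)} (hT : T ⊆ posQuad) :
    T ⊆ {c : ℕ × ℕ | c ∈ posQuad ∧ toR2 c ∈ convexHull ℝ (toR2 '' T)} :=
  fun c hc => ⟨hT hc, subset_convexHull ℝ _ ⟨c, hc, rfl⟩⟩

lemma setOf_notMem_convexHull_subset {T : Set (ℕ × ℕ)} :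
    {c : ℕ × ℕ | c ∈ posQuad ∧ toR2 c ∉ convexHull ℝ (toR2 '' (posQuad \ T))} ⊆ T :=
  fun c ⟨hc, hcT⟩ => by_contra fun h => hcT (subset_convexHull ℝ _ ⟨c, ⟨hc, h⟩, rfl⟩)

namespace IsTriangularSet

variable {S T : Set (ℕ × ℕ)}

lemma setOf_mem_convexHull_subset (hS : IsTriangularSet S) (hT : T ⊆ S) :
    {c : ℕ × ℕ | c ∈ posQuad ∧ toR2 c ∈ convexHull ℝ (toR2 '' T)} ⊆ S := by
  obtain ⟨H, hH, -, -, hSH⟩ := hS.exists_halfPlane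
  rintro c ⟨hc, hcT⟩
  refine (hSH c hc).2 (convexHull_min ?_ hH hcT)
  rintro _ ⟨d, hd, rfl⟩
  exact (hSH d (hS.subset_posQuad (hT hd))).1 (hT hd)

lemma subset_setOf_notMem_convexHull (hS : IsTriangularSet S) (hT : S ⊆ T) :
    S ⊆ {c : ℕ × ℕ | c ∈ posQuad ∧ toR2 c ∉ convexHull ℝ (toR2 '' (posQuad \ T))} := by
  obtain ⟨H, -, hH, -, hSH⟩ := hS.exists_halfPlane
  intro c hc
  have hc' := hS.subset_posQuad hc
  refine ⟨hc', fun h => convexHull_min ?_ hH h ((hSH c hc').1 hc)⟩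
  rintro _ ⟨d, ⟨hd, hdT⟩, rfl⟩ hdH
  exact hdT (hT ((hSH d hd).2 hdH))

end IsTriangularSet

lemma setOf_mem_convexHull_subset_Icc {T : Set (ℕ × ℕ)} {k : ℕ × ℕ}
    (hT : T ⊆ Set.Icc (1, 1) k) :
    {c : ℕ × ℕ | c ∈ posQuad ∧ toR2 c ∈ convexHull ℝ (toR2 '' T)} ⊆ Set.Icc (1, 1) k := by
  rintro c ⟨hc, hcT⟩
  have hTk : toR2 '' T ⊆ Set.Iic (toR2 k) :=
    Set.image_subset_iff.2 fun d hd => toR2_le_toR2.2 (hT hd).2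
  exact ⟨Prod.le_def.2 hc, toR2_le_toR2.1 (convexHull_min hTk (convex_Iic _) hcT)⟩

open scoped Pointwise in
lemma convexHull_subset_convexHull_add_Ici {E E' : Set (ℝ × ℝ)} (h : ∀ e ∈ E, ∃ e' ∈ E', e' ≤ e) :
    convexHull ℝ E ⊆ convexHull ℝ E' + Set.Ici 0 := by
  refine convexHull_min (fun e he => ?_) ((convex_convexHull ℝ _).add (convex_Ici 0))
  obtain ⟨e', he', hle⟩ := h e he
  exact ⟨e', subset_convexHull ℝ _ he', e - e', sub_nonneg.2 hle, add_sub_cancel _ _⟩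

theorem isTriangularSet_join {τ ν : Set (ℕ × ℕ)} (hτ : IsTriangularSet τ)
    (hν : IsTriangularSet ν) :
    IsTriangularSet {c : ℕ × ℕ | c ∈ posQuad ∧ toR2 c ∈ convexHull ℝ (toR2 '' (τ ∪ ν))} := by
  obtain ⟨X₁, Y₁, hτX⟩ := hτ.exists_subset_Icc
  obtain ⟨X₂, Y₂, hνX⟩ := hν.exists_subset_Icc
  obtain ⟨H₁, -, hH₁, hH₁l, hτH⟩ := hτ.exists_halfPlane
  obtain ⟨H₂, -, hH₂, hH₂l, hνH⟩ := hν.exists_halfPlane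
  set A := toR2 '' (τ ∪ ν)
  have hbox : τ ∪ ν ⊆ Set.Icc (1, 1) (max X₁ X₂, max Y₁ Y₂) := by
    rintro c (hc | hc)
    · exact Set.Icc_subset_Icc le_rfl (Prod.le_def.2 ⟨le_max_left _ _, le_max_left _ _⟩) (hτX hc)
    · exact Set.Icc_subset_Icc le_rfl (Prod.le_def.2 ⟨le_max_right _ _, le_max_right _ _⟩)
        (hνX hc)
  refine isTriangularSet_of_disjoint_convexHull (setOf_mem_convexHull_subset_Icc hbox)
    (Set.disjoint_left.2 fun z hzM hzD => ?_)
  have hzA : z ∈ convexHull ℝ A :=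
    convexHull_min (Set.image_subset_iff.2 fun c hc => hc.2) (convex_convexHull ℝ A) hzM
  refine not_le_of_mem_convexHull_of_isUpperSet (U := H₁ᶜ ∩ H₂ᶜ)
    (((Set.finite_Icc _ _).subset hbox).image _) ?_ (hH₁.inter hH₂) (hH₁l.compl.inter hH₂l.compl)
    ?_ ?_ ?_ hzD hzA le_rfl
  · rintro _ ⟨c, hc, rfl⟩ _ ⟨c', hc', rfl⟩
    have hc'₀ := Set.union_subset hτ.subset_posQuad hν.subset_posQuad hc'
    refine toR2_inf c c' ▸ ⟨c ⊓ c', ?_, rfl⟩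
    rcases hc with hc | hc
    exacts [.inl (hτ.inf_mem hc hc'₀), .inr (hν.inf_mem hc hc'₀)]
  · rintro _ ⟨c, hc | hc, rfl⟩ ⟨h₁, h₂⟩
    exacts [h₁ ((hτH c (hτ.subset_posQuad hc)).1 hc), h₂ ((hνH c (hν.subset_posQuad hc)).1 hc)]
  · rintro _ ⟨d, ⟨hd, hdM⟩, rfl⟩
    have hd' : d ∈ posQuad := Prod.le_def.1 hd.1
    have hAM := subset_setOf_mem_convexHull (Set.union_subset hτ.subset_posQuad hν.subset_posQuad)
    exact ⟨fun h => hdM (hAM (.inl ((hτH d hd').2 h))), fun h => hdM (hAM (.inr ((hνH d hd').2 h)))⟩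
  · rintro _ ⟨d, ⟨hd, hdM⟩, rfl⟩ h
    exact hdM ⟨Prod.le_def.1 hd.1, h⟩

open scoped Pointwise in
theorem isTriangularSet_meet {τ ν : Set (ℕ × ℕ)} (hτ : IsTriangularSet τ)
    (hν : IsTriangularSet ν) :
    IsTriangularSet {c : ℕ × ℕ | c ∈ posQuad ∧
      toR2 c ∉ convexHull ℝ (toR2 '' (posQuad \ (τ ∩ ν)))} := by
  obtain ⟨X, Y, hτX⟩ := hτ.exists_subset_Icc
  obtain ⟨H₁, hH₁, -, hH₁l, hτH⟩ := hτ.exists_halfPlane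
  obtain ⟨H₂, hH₂, -, hH₂l, hνH⟩ := hν.exists_halfPlane
  set E := posQuad \ (τ ∩ ν)
  set S := {c : ℕ × ℕ | c ∈ posQuad ∧ toR2 c ∉ convexHull ℝ (toR2 '' E)}
  set Ebox := Set.Icc (1, 1) (X + 1, Y + 1) \ (τ ∩ ν)
  have hS : S ⊆ τ ∩ ν := setOf_notMem_convexHull_subset
  have hbox : τ ∩ ν ⊆ Set.Icc (1, 1) (X, Y) := fun c hc => hτX hc.1
  refine isTriangularSet_of_disjoint_convexHull (hS.trans hbox)
    (Set.disjoint_left.2 fun z hzS hzD => ?_)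
  have hzE : z ∈ convexHull ℝ (toR2 '' E) := by
    refine convexHull_min ?_ (convex_convexHull ℝ _) hzD
    rintro _ ⟨d, ⟨hd, hdS⟩, rfl⟩
    by_contra h
    exact hdS ⟨Prod.le_def.1 hd.1, h⟩
  have hEbox : convexHull ℝ (toR2 '' E) ⊆ convexHull ℝ (toR2 '' Ebox) + Set.Ici 0 := by
    refine convexHull_subset_convexHull_add_Ici ?_
    rintro _ ⟨e, he, rfl⟩
    exact ⟨_, ⟨_, inf_mem_Icc_diff hbox he.1 he.2, rfl⟩, toR2_le_toR2.2 inf_le_left⟩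
  obtain ⟨w, hw, q, hq, rfl⟩ := hEbox hzE
  refine not_le_of_mem_convexHull_of_isLowerSet (U := H₁ ∩ H₂)
    (((Set.finite_Icc _ _).subset Set.sdiff_subset).image _) ?_ (hH₁.inter hH₂)
    (hH₁l.inter hH₂l) ?_ ?_ ?_ hzS hw (le_add_of_nonneg_right hq)
  · rintro _ ⟨e, he, rfl⟩ _ ⟨e', he', rfl⟩
    refine toR2_sup e e' ▸ ⟨e ⊔ e', ⟨⟨le_sup_of_le_left he.1.1, sup_le he.1.2 he'.1.2⟩,
      fun h => he.2 ?_⟩, rfl⟩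
    have he₀ : e ∈ posQuad := Prod.le_def.1 he.1.1
    exact ⟨hτ.mem_of_le h.1 he₀ le_sup_left, hν.mem_of_le h.2 he₀ le_sup_left⟩
  · rintro _ ⟨e, he, rfl⟩ ⟨h₁, h₂⟩
    have he₀ : e ∈ posQuad := Prod.le_def.1 he.1.1
    exact he.2 ⟨(hτH e he₀).2 h₁, (hνH e he₀).2 h₂⟩
  · rintro _ ⟨c, hc, rfl⟩
    exact ⟨(hτH c hc.1).1 (hS hc).1, (hνH c hc.1).1 (hS hc).2⟩
  · have hEboxE : Ebox ⊆ E := fun e he => ⟨Prod.le_def.1 he.1.1, he.2⟩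
    rintro _ ⟨c, hc, rfl⟩ h
    exact hc.2 (convexHull_mono (Set.image_mono hEboxE) h)

/-- the join of two triangular partitions is ℕ² ∩ Conv(τ ∪ ν) and
their meet is ℕ² \ (ℕ² ∩ Conv(ℕ² \ (τ ∩ ν))). -/
theorem stmt6 (τ ν : TriPart) :
    (∃ h : IsTriangularSet
        {c : ℕ × ℕ | c ∈ posQuad ∧ toR2 c ∈ convexHull ℝ (toR2 '' (τ.1 ∪ ν.1))},
      IsLUB ({τ, ν} : Set TriPart) ⟨_, h⟩) ∧
    (∃ h : IsTriangularSet
        {c : ℕ × ℕ | c ∈ posQuad ∧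
          toR2 c ∉ convexHull ℝ (toR2 '' (posQuad \ (τ.1 ∩ ν.1)))},
      IsGLB ({τ, ν} : Set TriPart) ⟨_, h⟩) := by
  obtain ⟨τ, hτ⟩ := τ
  obtain ⟨ν, hν⟩ := ν
  refine ⟨⟨isTriangularSet_join hτ hν, ?_, fun W hW => ?_⟩,
    ⟨isTriangularSet_meet hτ hν, ?_, fun L hL => ?_⟩⟩
  · have hA := subset_setOf_mem_convexHull (Set.union_subset hτ.subset_posQuad hν.subset_posQuad)
    rintro _ (rfl | rfl)
    exacts [Set.subset_union_left.trans hA, Set.subset_union_right.trans hA]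
  · exact W.2.setOf_mem_convexHull_subset (Set.union_subset (hW (.inl rfl)) (hW (.inr rfl)))
  · rintro _ (rfl | rfl)
    exacts [setOf_notMem_convexHull_subset.trans Set.inter_subset_left,
      setOf_notMem_convexHull_subset.trans Set.inter_subset_right]
  · exact L.2.subset_setOf_notMem_convexHull (Set.subset_inter (hL (.inl rfl)) (hL (.inr rfl)))
end

section
/- A finite binary word w = w₁...w_ℓ is balanced (any two factors of equal length have numbers of ones differing by at most 1) if and only if it is mechanical, i.e., there exist reals 0 < α, β < 1 with w_i = ⌊iα + β⌋ − ⌊(i−1)α + β⌋ for all 1 ≤ i ≤ ℓ. -/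
lemma floor_diff_bounds (x c : ℝ) : ⌊c⌋ ≤ ⌊x + c⌋ - ⌊x⌋ ∧ ⌊x + c⌋ - ⌊x⌋ ≤ ⌊c⌋ + 1 := by
  constructor
  · have : ⌊x⌋ + ⌊c⌋ ≤ ⌊x + c⌋ := by
      apply Int.le_floor.2
      push_cast
      have := Int.floor_le x
      have := Int.floor_le c
      linarith
    omega
  · have : ⌊x + c⌋ < ⌊x⌋ + ⌊c⌋ + 2 := by
      apply Int.floor_lt.2
      push_cast
      have := Int.lt_floor_add_one x
      have := Int.lt_floor_add_one c
      linarith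
    omega

lemma easy_dir (ℓ : ℕ) (w : ℕ → ℕ) (α β : ℝ)
    (hmech : ∀ i, 1 ≤ i → i ≤ ℓ →
      (w i : ℤ) = ⌊(i : ℝ) * α + β⌋ - ⌊((i : ℝ) - 1) * α + β⌋) :
    ∀ h i j : ℕ, 1 ≤ i → 1 ≤ j → i + h ≤ ℓ + 1 → j + h ≤ ℓ + 1 →
        |(∑ t ∈ Finset.Ico i (i + h), (w t : ℤ)) -
          ∑ t ∈ Finset.Ico j (j + h), (w t : ℤ)| ≤ 1 := by
  intro h i j hi hj hiℓ hjℓ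
  set g : ℕ → ℤ := fun n => ⌊(n : ℝ) * α + β⌋ with hg
  have hsum : ∀ a : ℕ, 1 ≤ a → a + h ≤ ℓ + 1 →
      (∑ t ∈ Finset.Ico a (a + h), (w t : ℤ)) = g (a - 1 + h) - g (a - 1) := by
    intro a ha haℓ
    rw [Finset.sum_Ico_eq_sum_range]
    have : ∀ n ∈ Finset.range (a + h - a), (w (a + n) : ℤ) = g (a - 1 + (n+1)) - g (a - 1 + n) := by
      intro n hn
      simp only [Finset.mem_range] at hn
      have h1 : 1 ≤ a + n := by omega
      have h2 : a + n ≤ ℓ := by omega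
      have := hmech (a + n) h1 h2
      have hcast : ((a + n : ℕ) : ℝ) - 1 = ((a - 1 + n : ℕ) : ℝ) := by
        push_cast [Nat.cast_sub ha]
        ring
      rw [this, hg]
      simp only
      congr 2
      · congr 2
        push_cast [Nat.cast_sub ha]
        ring
      · rw [hcast]
    rw [Finset.sum_congr rfl this, Finset.sum_range_sub (fun n => g (a - 1 + n))]
    simp
  rw [hsum i hi hiℓ, hsum j hj hjℓ]
  have hgs : ∀ a : ℕ, 1 ≤ a → g (a - 1 + h) = ⌊((a-1:ℕ) : ℝ) * α + β + (h:ℝ)*α⌋ := by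
    intro a ha
    rw [hg]
    congr 1
    push_cast
    ring
  have b1 := floor_diff_bounds (((i-1:ℕ) : ℝ) * α + β) ((h:ℝ)*α)
  have b2 := floor_diff_bounds (((j-1:ℕ) : ℝ) * α + β) ((h:ℝ)*α)
  rw [hgs i hi, hgs j hj]
  rw [abs_le]
  constructor <;> [linarith [b1.1, b2.2]; linarith [b1.2, b2.1]]

lemma key_ineq (ℓ : ℕ) (w : ℕ → ℕ)
    (Hbal : ∀ h i j : ℕ, 1 ≤ i → 1 ≤ j → i + h ≤ ℓ + 1 → j + h ≤ ℓ + 1 →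
      |(∑ t ∈ Finset.Ico i (i + h), (w t : ℤ)) -
        ∑ t ∈ Finset.Ico j (j + h), (w t : ℤ)| ≤ 1) :
    ∀ n h k i j, h + k ≤ n → 1 ≤ h → 1 ≤ k → 1 ≤ i → 1 ≤ j →
      i + h ≤ ℓ + 1 → j + k ≤ ℓ + 1 →
      (k : ℤ) * (∑ t ∈ Finset.Ico i (i + h), (w t : ℤ)) -
        (h : ℤ) * (∑ t ∈ Finset.Ico j (j + k), (w t : ℤ)) < h + k := by
  intro n
  induction n with
  | zero => intro h k i j hn hh; omega
  | succ n ih =>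
    intro h k i j hn hh hk hi hj hiℓ hjℓ
    rcases lt_trichotomy h k with hlt | heq | hgt
    · -- h < k : split S j k
      have hsplit : (∑ t ∈ Finset.Ico j (j + h), (w t : ℤ)) +
          (∑ t ∈ Finset.Ico (j + h) ((j + h) + (k - h)), (w t : ℤ)) =
          ∑ t ∈ Finset.Ico j (j + k), (w t : ℤ) := by
        have : (j + h) + (k - h) = j + k := by omega
        rw [this]
        exact Finset.sum_Ico_consecutive _ (by omega) (by omega)
      have hbal := Hbal h i j hi hj hiℓ (by omega)
      have hih := ih h (k - h) i (j + h) (by omega) hh (by omega) hi (by omega) hiℓ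
        (by omega)
      rw [abs_le] at hbal
      have hc : ((k - h : ℕ) : ℤ) = (k : ℤ) - (h : ℤ) := by push_cast [Nat.cast_sub (le_of_lt hlt)]; ring
      rw [hc] at hih
      have hh1 : (1 : ℤ) ≤ (h : ℤ) := by exact_mod_cast hh
      nlinarith [hbal.1, hbal.2, hih]
    · -- h = k
      subst heq
      have hbal := Hbal h i j hi hj hiℓ hjℓ
      rw [abs_le] at hbal
      have hh1 : (1 : ℤ) ≤ (h : ℤ) := by exact_mod_cast hh
      nlinarith [hbal.2]
    · -- h > k : split S i h
      have hsplit : (∑ t ∈ Finset.Ico i (i + k), (w t : ℤ)) +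
          (∑ t ∈ Finset.Ico (i + k) ((i + k) + (h - k)), (w t : ℤ)) =
          ∑ t ∈ Finset.Ico i (i + h), (w t : ℤ) := by
        have : (i + k) + (h - k) = i + h := by omega
        rw [this]
        exact Finset.sum_Ico_consecutive _ (by omega) (by omega)
      have hbal := Hbal k i j hi hj (by omega) hjℓ
      have hih := ih (h - k) k (i + k) j (by omega) (by omega) hk (by omega) hj
        (by omega) hjℓ
      rw [abs_le] at hbal
      have hc : ((h - k : ℕ) : ℤ) = (h : ℤ) - (k : ℤ) := by push_cast [Nat.cast_sub (le_of_lt hgt)]; ring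
      rw [hc] at hih
      have hk1 : (1 : ℤ) ≤ (k : ℤ) := by exact_mod_cast hk
      nlinarith [hbal.1, hbal.2, hih]

lemma hard_dir (ℓ : ℕ) (w : ℕ → ℕ) (hw : ∀ i, 1 ≤ i → i ≤ ℓ → w i ≤ 1)
    (Hbal : ∀ h i j : ℕ, 1 ≤ i → 1 ≤ j → i + h ≤ ℓ + 1 → j + h ≤ ℓ + 1 →
      |(∑ t ∈ Finset.Ico i (i + h), (w t : ℤ)) -
        ∑ t ∈ Finset.Ico j (j + h), (w t : ℤ)| ≤ 1) :
    ∃ α β : ℝ, 0 < α ∧ α < 1 ∧ 0 < β ∧ β < 1 ∧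
      ∀ i, 1 ≤ i → i ≤ ℓ →
        (w i : ℤ) = ⌊(i : ℝ) * α + β⌋ - ⌊((i : ℝ) - 1) * α + β⌋ := by
  classical
  set S : ℕ → ℕ → ℤ := fun i h => ∑ t ∈ Finset.Ico i (i + h), (w t : ℤ) with hS
  have Snn : ∀ i h, 0 ≤ S i h := fun i h =>
    Finset.sum_nonneg (fun t _ => by positivity)
  have Sle : ∀ i h, 1 ≤ i → i + h ≤ ℓ + 1 → S i h ≤ h := by
    intro i h hi hih
    calc S i h ≤ ∑ t ∈ Finset.Ico i (i + h), (1 : ℤ) := by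
          apply Finset.sum_le_sum
          intro t ht
          simp only [Finset.mem_Ico] at ht
          exact_mod_cast hw t (by omega) (by omega)
      _ = h := by simp
  set W : Finset (ℕ × ℕ) :=
    (Finset.Icc 1 ℓ ×ˢ Finset.Icc 1 ℓ).filter (fun p => p.1 + p.2 ≤ ℓ + 1) with hW
  have memW : ∀ i h : ℕ, 1 ≤ i → 1 ≤ h → i + h ≤ ℓ + 1 → (i, h) ∈ W := by
    intro i h hi hh hih
    simp only [hW, Finset.mem_filter, Finset.mem_product, Finset.mem_Icc]
    omega
  have Wspec : ∀ p ∈ W, 1 ≤ p.1 ∧ 1 ≤ p.2 ∧ p.1 + p.2 ≤ ℓ + 1 := by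
    intro p hp
    simp only [hW, Finset.mem_filter, Finset.mem_product, Finset.mem_Icc] at hp
    omega
  set LS : Finset ℝ :=
    insert 0 (W.image (fun p => ((S p.1 p.2 : ℝ) - 1) / (p.2 : ℝ))) with hLS
  set US : Finset ℝ :=
    insert 1 (W.image (fun p => ((S p.1 p.2 : ℝ) + 1) / (p.2 : ℝ))) with hUS
  have hLSne : LS.Nonempty := ⟨0, by simp [hLS]⟩
  have hUSne : US.Nonempty := ⟨1, by simp [hUS]⟩
  set L := LS.max' hLSne with hLdef
  set U := US.min' hUSne with hUdef
  have hpair : ∀ a ∈ LS, ∀ b ∈ US, a < b := by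
    intro a ha b hb
    simp only [hLS, hUS, Finset.mem_insert, Finset.mem_image] at ha hb
    rcases ha with rfl | ⟨p, hp, rfl⟩ <;> rcases hb with rfl | ⟨q, hq, rfl⟩
    · norm_num
    · obtain ⟨hq1, hq2, hq3⟩ := Wspec q hq
      have h1 : (0 : ℝ) < (S q.1 q.2 : ℝ) + 1 := by
        have := Snn q.1 q.2; positivity
      have h2 : (0 : ℝ) < (q.2 : ℝ) := by exact_mod_cast hq2
      positivity
    · obtain ⟨hp1, hp2, hp3⟩ := Wspec p hp
      have h2 : (0 : ℝ) < (p.2 : ℝ) := by exact_mod_cast hp2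
      rw [div_lt_one h2]
      have := Sle p.1 p.2 hp1 hp3
      have : (S p.1 p.2 : ℝ) ≤ (p.2 : ℝ) := by exact_mod_cast this
      linarith
    · obtain ⟨hp1, hp2, hp3⟩ := Wspec p hp
      obtain ⟨hq1, hq2, hq3⟩ := Wspec q hq
      have h2 : (0 : ℝ) < (p.2 : ℝ) := by exact_mod_cast hp2
      have h2' : (0 : ℝ) < (q.2 : ℝ) := by exact_mod_cast hq2
      rw [div_lt_div_iff₀ h2 h2']
      have hkey := key_ineq ℓ w Hbal (p.2 + q.2) p.2 q.2 p.1 q.1 le_rfl hp2 hq2 hp1 hq1 hp3 hq3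
      have hZ : ((S p.1 p.2 : ℤ) - 1) * (q.2 : ℤ) < ((S q.1 q.2 : ℤ) + 1) * (p.2 : ℤ) := by
        nlinarith [hkey]
      exact_mod_cast hZ
  have hLU : L < U := by
    rw [hLdef, Finset.max'_lt_iff]
    intro y hy
    rw [hUdef, Finset.lt_min'_iff]
    intro b hb
    exact hpair y hy b hb
  set α := (L + U) / 2 with hαdef
  have hLα : L < α := by rw [hαdef]; linarith
  have hαU : α < U := by rw [hαdef]; linarith
  have hα0 : 0 < α := lt_of_le_of_lt (Finset.le_max' LS 0 (by simp [hLS])) hLα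
  have hα1 : α < 1 := lt_of_lt_of_le hαU (Finset.min'_le US 1 (by simp [hUS]))
  have hlow : ∀ i h : ℕ, 1 ≤ i → 1 ≤ h → i + h ≤ ℓ + 1 → (S i h : ℝ) - 1 < (h : ℝ) * α := by
    intro i h hi hh hih
    have hm : ((S i h : ℝ) - 1) / (h : ℝ) ∈ LS := by
      rw [hLS]
      exact Finset.mem_insert_of_mem (Finset.mem_image.2 ⟨(i, h), memW i h hi hh hih, rfl⟩)
    have h2 : (0 : ℝ) < (h : ℝ) := by exact_mod_cast hh
    have := lt_of_le_of_lt (Finset.le_max' LS _ hm) hLα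
    rw [div_lt_iff₀ h2] at this
    linarith [this]
  have hhigh : ∀ i h : ℕ, 1 ≤ i → 1 ≤ h → i + h ≤ ℓ + 1 → (h : ℝ) * α < (S i h : ℝ) + 1 := by
    intro i h hi hh hih
    have hm : ((S i h : ℝ) + 1) / (h : ℝ) ∈ US := by
      rw [hUS]
      exact Finset.mem_insert_of_mem (Finset.mem_image.2 ⟨(i, h), memW i h hi hh hih, rfl⟩)
    have h2 : (0 : ℝ) < (h : ℝ) := by exact_mod_cast hh
    have := lt_of_lt_of_le hαU (Finset.min'_le US _ hm)
    rw [lt_div_iff₀ h2] at this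
    linarith [this]
  set s : ℕ → ℤ := fun i => S 1 i with hs
  have hdiff : ∀ i j : ℕ, i ≤ ℓ → j ≤ ℓ →
      (s i : ℝ) - (i : ℝ) * α < (s j : ℝ) + 1 - (j : ℝ) * α := by
    intro i j hi hj
    rcases lt_trichotomy i j with hij | rfl | hij
    · have hsplit : s i + S (1 + i) (j - i) = s j := by
        have h1 : (1 + i) + (j - i) = 1 + j := by omega
        show (∑ t ∈ Finset.Ico 1 (1 + i), (w t : ℤ)) +
            (∑ t ∈ Finset.Ico (1 + i) ((1 + i) + (j - i)), (w t : ℤ)) =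
            ∑ t ∈ Finset.Ico 1 (1 + j), (w t : ℤ)
        rw [h1]
        exact Finset.sum_Ico_consecutive _ (by omega) (by omega)
      have hh := hhigh (1 + i) (j - i) (by omega) (by omega) (by omega)
      have hc : ((j - i : ℕ) : ℝ) = (j : ℝ) - (i : ℝ) := by
        push_cast [Nat.cast_sub (le_of_lt hij)]; ring
      rw [hc] at hh
      have hcast : (S (1 + i) (j - i) : ℝ) = (s j : ℝ) - (s i : ℝ) := by
        have : S (1 + i) (j - i) = s j - s i := by omega
        exact_mod_cast this
      rw [hcast] at hh
      linarith
    · linarith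
    · have hsplit : s j + S (1 + j) (i - j) = s i := by
        have h1 : (1 + j) + (i - j) = 1 + i := by omega
        show (∑ t ∈ Finset.Ico 1 (1 + j), (w t : ℤ)) +
            (∑ t ∈ Finset.Ico (1 + j) ((1 + j) + (i - j)), (w t : ℤ)) =
            ∑ t ∈ Finset.Ico 1 (1 + i), (w t : ℤ)
        rw [h1]
        exact Finset.sum_Ico_consecutive _ (by omega) (by omega)
      have hl := hlow (1 + j) (i - j) (by omega) (by omega) (by omega)
      have hc : ((i - j : ℕ) : ℝ) = (i : ℝ) - (j : ℝ) := by
        push_cast [Nat.cast_sub (le_of_lt hij)]; ring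
      rw [hc] at hl
      have hcast : (S (1 + j) (i - j) : ℝ) = (s i : ℝ) - (s j : ℝ) := by
        have : S (1 + j) (i - j) = s i - s j := by omega
        exact_mod_cast this
      rw [hcast] at hl
      linarith
  set BL : Finset ℝ :=
    (Finset.range (ℓ + 1)).image (fun i => (s i : ℝ) - (i : ℝ) * α) with hBL
  set BH : Finset ℝ :=
    (Finset.range (ℓ + 1)).image (fun i => (s i : ℝ) + 1 - (i : ℝ) * α) with hBH
  have hBLne : BL.Nonempty := ⟨(s 0 : ℝ) - (0 : ℝ) * α, by
    rw [hBL]; exact Finset.mem_image.2 ⟨0, by simp, by norm_num⟩⟩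
  have hBHne : BH.Nonempty := ⟨(s 0 : ℝ) + 1 - (0 : ℝ) * α, by
    rw [hBH]; exact Finset.mem_image.2 ⟨0, by simp, by norm_num⟩⟩
  set blow := BL.max' hBLne with hblowdef
  set bhigh := BH.min' hBHne with hbhighdef
  have hbb : blow < bhigh := by
    rw [hblowdef, Finset.max'_lt_iff]
    intro a ha
    rw [hbhighdef, Finset.lt_min'_iff]
    intro b hb
    simp only [hBL, hBH, Finset.mem_image, Finset.mem_range] at ha hb
    obtain ⟨i, hi, rfl⟩ := ha
    obtain ⟨j, hj, rfl⟩ := hb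
    exact hdiff i j (by omega) (by omega)
  set β := (blow + bhigh) / 2 with hβdef
  have hblowβ : blow < β := by rw [hβdef]; linarith
  have hβbhigh : β < bhigh := by rw [hβdef]; linarith
  have hs0 : s 0 = 0 := by simp [hs, hS]
  have hβ0 : 0 < β := by
    have hm : (s 0 : ℝ) - (0 : ℝ) * α ∈ BL := by
      rw [hBL]; exact Finset.mem_image.2 ⟨0, by simp, by norm_num⟩
    have := lt_of_le_of_lt (Finset.le_max' BL _ hm) hblowβ
    rw [hs0] at this
    simpa using this
  have hβ1 : β < 1 := by
    have hm : (s 0 : ℝ) + 1 - (0 : ℝ) * α ∈ BH := by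
      rw [hBH]; exact Finset.mem_image.2 ⟨0, by simp, by norm_num⟩
    have := lt_of_lt_of_le hβbhigh (Finset.min'_le BH _ hm)
    rw [hs0] at this
    simpa using this
  have hfloor : ∀ i : ℕ, i ≤ ℓ → ⌊(i : ℝ) * α + β⌋ = s i := by
    intro i hi
    rw [Int.floor_eq_iff]
    constructor
    · have hm : (s i : ℝ) - (i : ℝ) * α ∈ BL := by
        rw [hBL]; exact Finset.mem_image.2 ⟨i, by simp; omega, rfl⟩
      have := lt_of_le_of_lt (Finset.le_max' BL _ hm) hblowβ
      linarith
    · have hm : (s i : ℝ) + 1 - (i : ℝ) * α ∈ BH := by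
        rw [hBH]; exact Finset.mem_image.2 ⟨i, by simp; omega, rfl⟩
      have := lt_of_lt_of_le hβbhigh (Finset.min'_le BH _ hm)
      push_cast
      linarith
  refine ⟨α, β, hα0, hα1, hβ0, hβ1, ?_⟩
  intro i hi1 hi2
  have e1 : ⌊(i : ℝ) * α + β⌋ = s i := hfloor i hi2
  have e2 : ⌊((i : ℝ) - 1) * α + β⌋ = s (i - 1) := by
    have hc : ((i : ℝ) - 1) = ((i - 1 : ℕ) : ℝ) := by
      push_cast [Nat.cast_sub hi1]; ring
    rw [hc]
    exact hfloor (i - 1) (by omega)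
  rw [e1, e2]
  have hsplit : s (i - 1) + (w i : ℤ) = s i := by
    show (∑ t ∈ Finset.Ico 1 (1 + (i - 1)), (w t : ℤ)) + (w i : ℤ) =
      ∑ t ∈ Finset.Ico 1 (1 + i), (w t : ℤ)
    have h2 : (∑ t ∈ Finset.Ico 1 (1 + (i - 1)), (w t : ℤ)) +
        (∑ t ∈ Finset.Ico (1 + (i - 1)) (1 + i), (w t : ℤ)) =
        ∑ t ∈ Finset.Ico 1 (1 + i), (w t : ℤ) :=
      Finset.sum_Ico_consecutive _ (by omega) (by omega)
    have h5 : Finset.Ico (1 + (i - 1)) (1 + i) = {i} := by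
      have h3 : 1 + (i - 1) = i := by omega
      rw [h3, Nat.add_comm]
      exact Nat.Ico_succ_singleton i
    rw [h5, Finset.sum_singleton] at h2
    exact h2
  omega

/-- a finite binary word is balanced iff it is mechanical.
The word is `w 1, ..., w ℓ` (1-indexed) with letters in {0,1}. -/
theorem stmt8 (ℓ : ℕ) (w : ℕ → ℕ) (hw : ∀ i, 1 ≤ i → i ≤ ℓ → w i ≤ 1) :
    (∀ h i j : ℕ, 1 ≤ i → 1 ≤ j → i + h ≤ ℓ + 1 → j + h ≤ ℓ + 1 →
        |(∑ t ∈ Finset.Ico i (i + h), (w t : ℤ)) -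
          ∑ t ∈ Finset.Ico j (j + h), (w t : ℤ)| ≤ 1) ↔
      (∃ α β : ℝ, 0 < α ∧ α < 1 ∧ 0 < β ∧ β < 1 ∧
        ∀ i, 1 ≤ i → i ≤ ℓ →
          (w i : ℤ) = ⌊(i : ℝ) * α + β⌋ - ⌊((i : ℝ) - 1) * α + β⌋) := by
  constructor
  · intro Hbal
    exact hard_dir ℓ w hw Hbal
  · rintro ⟨α, β, -, -, -, -, hmech⟩
    exact easy_dir ℓ w α β hmech
end

section
/- For a triangular partition τ = (τ₁, ..., τ_k), the following are equivalent: (a) τ admits a cutting line x/r + y/s = 1 with r > s; (b) τ₁ ≥ k; (c) the parts of τ are pairwise distinct. -/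
def IsCuttingLine (r s : ℝ) (k : ℕ) (τ : ℕ → ℕ) : Prop :=
  0 < r ∧ 0 < s ∧
    (∀ j : ℕ, 1 ≤ j → j ≤ k → (τ j : ℤ) = ⌊r - (j : ℝ) * r / s⌋) ∧
    (k : ℤ) = ⌊s - s / r⌋

/-- When s ≤ r (slope ≥ 1), parts drop by at least 1 per step. -/
lemma gap_lower {r s : ℝ} {k : ℕ} {τ : ℕ → ℕ} (h : IsCuttingLine r s k τ)
    (hrs : s ≤ r) {i j : ℕ} (hi : 1 ≤ i) (hij : i ≤ j) (hj : j ≤ k) :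
    (τ j : ℤ) + ((j : ℤ) - (i : ℤ)) ≤ (τ i : ℤ) := by
  obtain ⟨hr, hs, hτ, hkk⟩ := h
  rw [hτ i hi (hij.trans hj), hτ j (hi.trans hij) hj]
  have ht : (1:ℝ) ≤ r / s := (one_le_div hs).mpr hrs
  have hji : (i:ℝ) ≤ j := by exact_mod_cast hij
  have key : r - (j:ℝ) * r / s + (((j : ℤ) - (i : ℤ) : ℤ) : ℝ) ≤ r - (i:ℝ) * r / s := by
    push_cast
    have h1 : ((j:ℝ) - i) * 1 ≤ ((j:ℝ) - i) * (r/s) :=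
      mul_le_mul_of_nonneg_left ht (by linarith)
    have h2 : (j:ℝ) * r / s = (j:ℝ) * (r/s) := by ring
    have h3 : (i:ℝ) * r / s = (i:ℝ) * (r/s) := by ring
    nlinarith [h1]
  calc ⌊r - (j:ℝ) * r / s⌋ + ((j : ℤ) - (i : ℤ))
      = ⌊r - (j:ℝ) * r / s + (((j : ℤ) - (i : ℤ) : ℤ) : ℝ)⌋ := (Int.floor_add_intCast _ _).symm
    _ ≤ ⌊r - (i:ℝ) * r / s⌋ := Int.floor_le_floor key

/-- When r ≤ s (slope ≤ 1), parts drop by at most 1 per step. -/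
lemma gap_upper {r s : ℝ} {k : ℕ} {τ : ℕ → ℕ} (h : IsCuttingLine r s k τ)
    (hrs : r ≤ s) {i j : ℕ} (hi : 1 ≤ i) (hij : i ≤ j) (hj : j ≤ k) :
    (τ i : ℤ) ≤ (τ j : ℤ) + ((j : ℤ) - (i : ℤ)) := by
  obtain ⟨hr, hs, hτ, hkk⟩ := h
  rw [hτ i hi (hij.trans hj), hτ j (hi.trans hij) hj]
  have ht : r / s ≤ 1 := (div_le_one hs).mpr hrs
  have ht0 : 0 < r / s := div_pos hr hs
  have hji : (i:ℝ) ≤ j := by exact_mod_cast hij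
  have key : r - (i:ℝ) * r / s ≤ r - (j:ℝ) * r / s + (((j : ℤ) - (i : ℤ) : ℤ) : ℝ) := by
    push_cast
    have h1 : ((j:ℝ) - i) * (r/s) ≤ ((j:ℝ) - i) * 1 :=
      mul_le_mul_of_nonneg_left ht (by linarith)
    have h2 : (j:ℝ) * r / s = (j:ℝ) * (r/s) := by ring
    have h3 : (i:ℝ) * r / s = (i:ℝ) * (r/s) := by ring
    nlinarith [h1]
  calc ⌊r - (i:ℝ) * r / s⌋ ≤ ⌊r - (j:ℝ) * r / s + (((j : ℤ) - (i : ℤ) : ℤ) : ℝ)⌋ :=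
        Int.floor_le_floor key
    _ = ⌊r - (j:ℝ) * r / s⌋ + ((j : ℤ) - (i : ℤ)) := Int.floor_add_intCast _ _

/-- Parts are weakly decreasing for any cutting line. -/
lemma mono_parts {r s : ℝ} {k : ℕ} {τ : ℕ → ℕ} (h : IsCuttingLine r s k τ)
    {i j : ℕ} (hi : 1 ≤ i) (hij : i ≤ j) (hj : j ≤ k) :
    (τ j : ℤ) ≤ (τ i : ℤ) := by
  obtain ⟨hr, hs, hτ, hkk⟩ := h
  rw [hτ i hi (hij.trans hj), hτ j (hi.trans hij) hj]
  apply Int.floor_le_floor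
  have ht0 : 0 ≤ r / s := le_of_lt (div_pos hr hs)
  have hji : (i:ℝ) ≤ j := by exact_mod_cast hij
  have h1 : (i:ℝ) * (r/s) ≤ (j:ℝ) * (r/s) := mul_le_mul_of_nonneg_right hji ht0
  have h2 : (j:ℝ) * r / s = (j:ℝ) * (r/s) := by ring
  have h3 : (i:ℝ) * r / s = (i:ℝ) * (r/s) := by ring
  linarith [h1]

/-- The last part is at least 1. -/
lemma last_ge_one {r s : ℝ} {k : ℕ} {τ : ℕ → ℕ} (h : IsCuttingLine r s k τ)
    (hk : 1 ≤ k) : 1 ≤ (τ k : ℤ) := by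
  obtain ⟨hr, hs, hτ, hkk⟩ := h
  rw [hτ k hk le_rfl]
  apply Int.le_floor.mpr
  have h1 : (k:ℝ) ≤ s - s/r := by
    have := Int.floor_le (s - s/r)
    rw [← hkk] at this; exact_mod_cast this
  have ht0 : 0 < r / s := div_pos hr hs
  have h2 : (k:ℝ) * (r/s) ≤ (s - s/r) * (r/s) := mul_le_mul_of_nonneg_right h1 ht0.le
  have h3 : (s - s/r) * (r/s) = r - 1 := by field_simp
  have h4 : (k:ℝ) * r / s = (k:ℝ) * (r/s) := by ring
  push_cast
  linarith

/-- When r ≤ s, the last part is at most 1. -/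
lemma last_le_one {r s : ℝ} {k : ℕ} {τ : ℕ → ℕ} (h : IsCuttingLine r s k τ)
    (hrs : r ≤ s) (hk : 1 ≤ k) : (τ k : ℤ) ≤ 1 := by
  obtain ⟨hr, hs, hτ, hkk⟩ := h
  rw [hτ k hk le_rfl]
  have h1 : s - s/r < (k:ℝ) + 1 := by
    have := Int.lt_floor_add_one (s - s/r)
    rw [← hkk] at this; exact_mod_cast this
  have ht0 : 0 < r / s := div_pos hr hs
  have ht1 : r / s ≤ 1 := (div_le_one hs).mpr hrs
  have h2 : (s - s/r) * (r/s) < ((k:ℝ) + 1) * (r/s) := by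
    exact mul_lt_mul_of_pos_right h1 ht0
  have h3 : (s - s/r) * (r/s) = r - 1 := by field_simp
  have h4 : (k:ℝ) * r / s = (k:ℝ) * (r/s) := by ring
  have h5 : r - (k:ℝ) * r / s < 2 := by nlinarith
  have := Int.floor_lt.mpr (show r - (k:ℝ) * r / s < ((2:ℤ):ℝ) by exact_mod_cast h5)
  omega

/-- Explicit wide cutting line for the staircase (k, k-1, ..., 1). -/
lemma staircase_wide (k : ℕ) (τ : ℕ → ℕ) (hk : 1 ≤ k)
    (hτ : ∀ j : ℕ, 1 ≤ j → j ≤ k → (τ j : ℤ) = (k : ℤ) + 1 - j) :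
    ∃ r s : ℝ, IsCuttingLine r s k τ ∧ s < r := by
  have hK : (1:ℝ) ≤ (k:ℝ) := by exact_mod_cast hk
  set K : ℝ := (k:ℝ) with hKdef
  refine ⟨K + 3/2, K * (2*K+3) / (2*K+1), ⟨by linarith, ?_, ?_, ?_⟩, ?_⟩
  · positivity
  · intro j hj1 hjk
    have hJ1 : (1:ℝ) ≤ (j:ℝ) := by exact_mod_cast hj1
    have hJK : (j:ℝ) ≤ K := by rw [hKdef]; exact_mod_cast hjk
    set J : ℝ := (j:ℝ) with hJdef
    rw [hτ j hj1 hjk]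
    symm
    rw [Int.floor_eq_iff]
    have hd1 : (0:ℝ) < 2*K+1 := by linarith
    have hd2 : (0:ℝ) < 2*K+3 := by linarith
    have hd3 : (0:ℝ) < 2*K := by linarith
    have hs0 : (0:ℝ) < K * (2*K+3) / (2*K+1) := by positivity
    have hval : (K + 3/2) - J * (K + 3/2) / (K * (2*K+3) / (2*K+1))
        = K + 3/2 - J - J / (2*K) := by
      field_simp
      ring
    constructor
    · rw [hval]
      push_cast
      have : J / (2*K) ≤ 1/2 := by
        rw [div_le_iff₀ hd3]; linarith
      linarith
    · rw [hval]
      push_cast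
      have : (0:ℝ) ≤ J / (2*K) := by positivity
      linarith
  · have hd1 : (0:ℝ) < 2*K+1 := by linarith
    have hd2 : (0:ℝ) < 2*K+3 := by linarith
    have hr0 : (0:ℝ) < K + 3/2 := by linarith
    have hval : K * (2*K+3) / (2*K+1) - (K * (2*K+3) / (2*K+1)) / (K + 3/2) = K := by
      field_simp
      ring
    rw [hval, hKdef, Int.floor_natCast]
  · have hd1 : (0:ℝ) < 2*K+1 := by linarith
    rw [div_lt_iff₀ hd1]
    nlinarith

/-- for a triangular partition τ with k ≥ 1 parts, the following are
equivalent: τ is wide (admits a cutting line with r > s); τ₁ ≥ k; the parts of τ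
are pairwise distinct. -/
theorem stmt9 (k : ℕ) (τ : ℕ → ℕ) (hk : 1 ≤ k)
    (htri : ∃ r s : ℝ, IsCuttingLine r s k τ) :
    ((∃ r s : ℝ, IsCuttingLine r s k τ ∧ s < r) ↔ k ≤ τ 1) ∧
    ((∃ r s : ℝ, IsCuttingLine r s k τ ∧ s < r) ↔
      ∀ i j : ℕ, 1 ≤ i → i < j → j ≤ k → τ i ≠ τ j) := by
  obtain ⟨r0, s0, h0⟩ := htri
  -- (a) → (b)
  have hab : (∃ r s : ℝ, IsCuttingLine r s k τ ∧ s < r) → k ≤ τ 1 := by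
    rintro ⟨r, s, h, hsr⟩
    have h1 := gap_lower (i := 1) (j := k) h hsr.le le_rfl hk le_rfl
    have h2 := last_ge_one h hk
    omega
  -- (b) → (a)
  have hba : k ≤ τ 1 → (∃ r s : ℝ, IsCuttingLine r s k τ ∧ s < r) := by
    intro hb
    by_cases hsr : s0 < r0
    · exact ⟨r0, s0, h0, hsr⟩
    · push_neg at hsr
      apply staircase_wide k τ hk
      intro j hj1 hjk
      have h1 := gap_upper (i := 1) (j := j) h0 hsr le_rfl hj1 hjk
      have h2 := gap_upper (i := j) (j := k) h0 hsr hj1 hjk le_rfl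
      have h3 := last_le_one h0 hsr hk
      omega
  -- (a) → (c)
  have hac : (∃ r s : ℝ, IsCuttingLine r s k τ ∧ s < r) →
      ∀ i j : ℕ, 1 ≤ i → i < j → j ≤ k → τ i ≠ τ j := by
    rintro ⟨r, s, h, hsr⟩ i j hi hij hjk heq
    have h1 := gap_lower h hsr.le hi hij.le hjk
    omega
  -- (c) → (b)
  have hcb : (∀ i j : ℕ, 1 ≤ i → i < j → j ≤ k → τ i ≠ τ j) → k ≤ τ 1 := by
    intro hc
    have step : ∀ i : ℕ, 1 ≤ i → i + 1 ≤ k → τ (i + 1) < τ i := by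
      intro i hi hik
      have h1 := mono_parts h0 hi (by omega : i ≤ i + 1) hik
      have h2 := hc i (i+1) hi (Nat.lt_succ_self i) hik
      omega
    have chain : ∀ n : ℕ, ∀ i : ℕ, 1 ≤ i → i + n ≤ k → τ (i + n) + n ≤ τ i := by
      intro n
      induction n with
      | zero => intro i _ _; simp
      | succ m ih =>
        intro i hi hik
        have hst := step i hi (by omega)
        have := ih (i+1) (by omega) (by omega)
        have : τ (i + 1 + m) + m ≤ τ (i + 1) := this
        have heq : i + 1 + m = i + (m + 1) := by omega
        rw [heq] at this
        omega
    have h1 := chain (k - 1) 1 le_rfl (by omega)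
    have h2 := last_ge_one h0 hk
    have heq : 1 + (k - 1) = k := by omega
    rw [heq] at h1
    omega
  exact ⟨⟨hab, hba⟩, ⟨hac, fun hc => hba (hcb hc)⟩⟩
end

section
/- For a triangular partition τ = (τ₁, ..., τ_k), the following are equivalent: (a') τ admits both a cutting line with r > s and a cutting line with r < s; (b') τ₁ = k; (c') τ is the staircase partition (k, k−1, ..., 2, 1). -/
lemma aux_staircase (r s : ℝ) (k : ℕ) (τ : ℕ → ℕ) (hk : 1 ≤ k)
    (h : IsCuttingLine r s k τ) (h1 : τ 1 = k) :
    ∀ j : ℕ, 1 ≤ j → j ≤ k → τ j = k + 1 - j := by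
  obtain ⟨hr, hs, hpart, hcount⟩ := h
  set c := r / s with hc_def
  have hc : 0 < c := div_pos hr hs
  have hA : (k : ℝ) ≤ s - s / r := by
    have := Int.floor_le (s - s / r)
    rw [← hcount] at this; exact_mod_cast this
  have hB : s - s / r < (k : ℝ) + 1 := by
    have := Int.lt_floor_add_one (s - s / r)
    rw [← hcount] at this; exact_mod_cast this
  have e1 : s - s / r = (r - 1) / c := by
    rw [hc_def]; field_simp
  have hkc : (k : ℝ) * c ≤ r - 1 := by
    rw [e1] at hA; exact (le_div_iff₀ hc).mp hA
  have hkc' : r - 1 < ((k : ℝ) + 1) * c := by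
    rw [e1] at hB; exact (div_lt_iff₀ hc).mp hB
  have hτ1 : (k : ℤ) = ⌊r - c⌋ := by
    have := hpart 1 le_rfl hk
    rw [h1] at this
    simpa [hc_def, mul_div_assoc] using this
  have hC : (k : ℝ) ≤ r - c := by
    have := Int.floor_le (r - c)
    rw [← hτ1] at this; exact_mod_cast this
  have hD : r - c < (k : ℝ) + 1 := by
    have := Int.lt_floor_add_one (r - c)
    rw [← hτ1] at this; exact_mod_cast this
  intro j hj1 hjk
  have hj : (1 : ℝ) ≤ (j : ℝ) := by exact_mod_cast hj1
  have hjk' : (j : ℝ) ≤ (k : ℝ) := by exact_mod_cast hjk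
  have hbounds : ((k : ℝ) + 1 - j) ≤ r - j * c ∧ r - j * c < (k : ℝ) + 2 - j := by
    rcases le_total c 1 with hcone | hcone
    · constructor
      · nlinarith [mul_nonneg (by linarith : (0:ℝ) ≤ (j:ℝ) - 1) (by linarith : (0:ℝ) ≤ 1 - c)]
      · nlinarith [mul_nonneg (by linarith : (0:ℝ) ≤ (k:ℝ) + 1 - j) (by linarith : (0:ℝ) ≤ 1 - c)]
    · constructor
      · nlinarith [mul_nonneg (by linarith : (0:ℝ) ≤ (k:ℝ) - j) (by linarith : (0:ℝ) ≤ c - 1)]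
      · nlinarith [mul_nonneg (by linarith : (0:ℝ) ≤ (j:ℝ) - 1) (by linarith : (0:ℝ) ≤ c - 1)]
  have hfloor : ⌊r - (j : ℝ) * r / s⌋ = (k : ℤ) + 1 - j := by
    rw [show r - (j : ℝ) * r / s = r - j * c by rw [hc_def, mul_div_assoc]]
    apply Int.floor_eq_iff.mpr
    constructor
    · push_cast; linarith [hbounds.1]
    · push_cast; linarith [hbounds.2]
  have := hpart j hj1 hjk
  rw [hfloor] at this
  omega

lemma aux_wide (k : ℕ) (τ : ℕ → ℕ) (hk : 1 ≤ k)
    (hst : ∀ j : ℕ, 1 ≤ j → j ≤ k → τ j = k + 1 - j) :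
    IsCuttingLine ((k : ℝ) + 2) ((k : ℝ) + 1) k τ := by
  have hk1 : (0 : ℝ) < (k : ℝ) + 1 := by positivity
  have hk2 : (0 : ℝ) < (k : ℝ) + 2 := by positivity
  refine ⟨hk2, hk1, ?_, ?_⟩
  · intro j hj1 hjk
    have hτ := hst j hj1 hjk
    have hj : (1 : ℝ) ≤ (j : ℝ) := by exact_mod_cast hj1
    have hjk' : (j : ℝ) ≤ (k : ℝ) := by exact_mod_cast hjk
    have hfl : ⌊((k : ℝ) + 2) - (j : ℝ) * ((k : ℝ) + 2) / ((k : ℝ) + 1)⌋ = (k : ℤ) + 1 - j := by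
      apply Int.floor_eq_iff.mpr
      constructor
      · have : (j : ℝ) * ((k : ℝ) + 2) / ((k : ℝ) + 1) ≤ (j : ℝ) + 1 := by
          rw [div_le_iff₀ hk1]; nlinarith
        push_cast; linarith
      · have : (j : ℝ) < (j : ℝ) * ((k : ℝ) + 2) / ((k : ℝ) + 1) := by
          rw [lt_div_iff₀ hk1]; nlinarith
        push_cast; linarith
    rw [hfl, hτ]; omega
  · symm
    apply Int.floor_eq_iff.mpr
    constructor
    · have : ((k : ℝ) + 1) / ((k : ℝ) + 2) ≤ 1 := by
        rw [div_le_one hk2]; linarith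
      push_cast; linarith
    · have : (0 : ℝ) < ((k : ℝ) + 1) / ((k : ℝ) + 2) := by positivity
      push_cast; linarith

lemma aux_tall (k : ℕ) (τ : ℕ → ℕ) (hk : 1 ≤ k)
    (hst : ∀ j : ℕ, 1 ≤ j → j ≤ k → τ j = k + 1 - j) :
    IsCuttingLine ((k : ℝ) + 1) ((k : ℝ) + 2) k τ := by
  have hk1 : (0 : ℝ) < (k : ℝ) + 1 := by positivity
  have hk2 : (0 : ℝ) < (k : ℝ) + 2 := by positivity
  have hkR : (1 : ℝ) ≤ (k : ℝ) := by exact_mod_cast hk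
  refine ⟨hk1, hk2, ?_, ?_⟩
  · intro j hj1 hjk
    have hτ := hst j hj1 hjk
    have hj : (1 : ℝ) ≤ (j : ℝ) := by exact_mod_cast hj1
    have hjk' : (j : ℝ) ≤ (k : ℝ) := by exact_mod_cast hjk
    have hfl : ⌊((k : ℝ) + 1) - (j : ℝ) * ((k : ℝ) + 1) / ((k : ℝ) + 2)⌋ = (k : ℤ) + 1 - j := by
      apply Int.floor_eq_iff.mpr
      constructor
      · have : (j : ℝ) * ((k : ℝ) + 1) / ((k : ℝ) + 2) ≤ (j : ℝ) := by
          rw [div_le_iff₀ hk2]; nlinarith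
        push_cast; linarith
      · have : (j : ℝ) - 1 < (j : ℝ) * ((k : ℝ) + 1) / ((k : ℝ) + 2) := by
          rw [lt_div_iff₀ hk2]; nlinarith
        push_cast; linarith
    rw [hfl, hτ]; omega
  · symm
    apply Int.floor_eq_iff.mpr
    constructor
    · have : ((k : ℝ) + 2) / ((k : ℝ) + 1) ≤ 2 := by
        rw [div_le_iff₀ hk1]; linarith
      push_cast; linarith
    · have : (1 : ℝ) < ((k : ℝ) + 2) / ((k : ℝ) + 1) := by
        rw [lt_div_iff₀ hk1]; linarith
      push_cast; linarith

lemma aux_tau1_ge (r s : ℝ) (k : ℕ) (τ : ℕ → ℕ) (hk : 1 ≤ k)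
    (h : IsCuttingLine r s k τ) (hrs : s < r) : k ≤ τ 1 := by
  obtain ⟨hr, hs, hpart, hcount⟩ := h
  have hkR : (1 : ℝ) ≤ (k : ℝ) := by exact_mod_cast hk
  have hA : (k : ℝ) ≤ s - s / r := by
    have := Int.floor_le (s - s / r)
    rw [← hcount] at this; exact_mod_cast this
  have h2 : s ≤ (s - k) * r := by
    rw [← div_le_iff₀ hr]; linarith
  have h3 : r / s ≤ r - k := by
    rw [div_le_iff₀ hs]
    nlinarith [mul_nonneg (by linarith : (0:ℝ) ≤ (k:ℝ) - 1) (by linarith : (0:ℝ) ≤ r - s)]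
  have h4 : (k : ℝ) ≤ r - 1 * r / s := by
    rw [one_mul]; linarith
  have h5 : (k : ℤ) ≤ ⌊r - 1 * r / s⌋ := by
    apply Int.le_floor.mpr; exact_mod_cast h4
  have h6 := hpart 1 le_rfl hk
  rw [Nat.cast_one] at h6
  omega

lemma aux_tau1_le (r s : ℝ) (k : ℕ) (τ : ℕ → ℕ) (hk : 1 ≤ k)
    (h : IsCuttingLine r s k τ) (hrs : r < s) : τ 1 ≤ k := by
  obtain ⟨hr, hs, hpart, hcount⟩ := h
  have hB : s - s / r < (k : ℝ) + 1 := by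
    have := Int.lt_floor_add_one (s - s / r)
    rw [← hcount] at this; exact_mod_cast this
  have h2 : (s - ((k : ℝ) + 1)) * r < s := by
    rw [← lt_div_iff₀ hr]; linarith
  have h3 : r - ((k : ℝ) + 1) < r / s := by
    rw [lt_div_iff₀ hs]
    nlinarith [mul_nonneg (by positivity : (0:ℝ) ≤ (k:ℝ)) (by linarith : (0:ℝ) ≤ s - r)]
  have h4 : r - 1 * r / s < (k : ℝ) + 1 := by
    rw [one_mul]; linarith
  have h5 : ⌊r - 1 * r / s⌋ < (k : ℤ) + 1 := by
    apply Int.floor_lt.mpr; push_cast; exact h4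
  have h6 := hpart 1 le_rfl hk
  rw [Nat.cast_one] at h6
  omega

/-- for a triangular partition τ with k ≥ 1 parts, the following are
equivalent: τ is both wide and tall (admits cutting lines with r > s and with
r < s); τ₁ = k; τ is the staircase (k, k−1, ..., 1). -/
theorem stmt10 (k : ℕ) (τ : ℕ → ℕ) (hk : 1 ≤ k)
    (htri : ∃ r s : ℝ, IsCuttingLine r s k τ) :
    (((∃ r s : ℝ, IsCuttingLine r s k τ ∧ s < r) ∧
        (∃ r s : ℝ, IsCuttingLine r s k τ ∧ r < s)) ↔ τ 1 = k) ∧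
    (τ 1 = k ↔ ∀ j : ℕ, 1 ≤ j → j ≤ k → τ j = k + 1 - j) := by
  obtain ⟨r0, s0, h0⟩ := htri
  constructor
  · constructor
    · rintro ⟨⟨r1, s1, h1, hw⟩, ⟨r2, s2, h2, ht⟩⟩
      have hge := aux_tau1_ge r1 s1 k τ hk h1 hw
      have hle := aux_tau1_le r2 s2 k τ hk h2 ht
      omega
    · intro h1
      have hst := aux_staircase r0 s0 k τ hk h0 h1
      exact ⟨⟨_, _, aux_wide k τ hk hst, by linarith⟩,
             ⟨_, _, aux_tall k τ hk hst, by linarith⟩⟩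
  · constructor
    · intro h1
      exact aux_staircase r0 s0 k τ hk h0 h1
    · intro hst
      have := hst 1 le_rfl hk
      omega
end
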